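/- arXiv:1507.07311 — 5 statements merged into one kernel-verified Lean document; each statement's English description precedes it below -/
import Mathlib

section
/- Let a, b : [0,∞) → [0,∞) be smooth increasing functions with b ≥ a such that the integral ∫₀^∞ (b(t)² − a(t)²)/b(t) dt is finite. Let f_a and f_b be the solutions of the Jacobi equations f'' = a² f and f'' = b² f with f(0) = 0, f'(0) = 1. Then there exists a constant c > 0 (depending only on the value of the integral) such that f_b(t) ≤ c · f_a(t) for all t ≥ 0. -/
open Real Set MeasureTheory Filter

private lemma contdiff_deriv_one {f : ℝ → ℝ} (hf : ContDiff ℝ (⊤ : ℕ∞) f) : ContDiff ℝ 1 (deriv f) := by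
  have := ContDiff.iterate_deriv' 1 1 (f := f) (hf.of_le (WithTop.coe_le_coe.2 (le_top : ((1 + 1 : ℕ) : ℕ∞) ≤ ⊤)))
  simpa using this

private lemma slope_lim {f : ℝ → ℝ} (hfd : Differentiable ℝ f) (hf0 : f 0 = 0)
    (hf1 : deriv f 0 = 1) :
    Tendsto (fun t => f t / t) (nhdsWithin 0 (Ioi 0)) (nhds 1) := by
  have hD : HasDerivAt f 1 0 := by
    have := (hfd 0).hasDerivAt
    rwa [hf1] at this
  have := hasDerivAt_iff_tendsto_slope.1 hD
  have h2 : Tendsto (slope f 0) (nhdsWithin 0 (Ioi 0)) (nhds 1) :=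
    this.mono_left (nhdsWithin_mono 0 (fun x hx => ne_of_gt hx))
  refine h2.congr' ?_
  filter_upwards [self_mem_nhdsWithin] with x hx
  simp [slope, hf0, div_eq_inv_mul]

private lemma jacobi_pos (k f : ℝ → ℝ) (hknn : ∀ t, 0 ≤ k t)
    (hf : ContDiff ℝ (⊤ : ℕ∞) f) (hf0 : f 0 = 0) (hf1 : deriv f 0 = 1)
    (hode : ∀ t ≥ (0:ℝ), deriv (deriv f) t = k t * f t) :
    (∀ t > (0:ℝ), 0 < f t) ∧ (∀ t ≥ (0:ℝ), 1 ≤ deriv f t) := by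
  have hfd : Differentiable ℝ f := hf.differentiable (by simp)
  have h1 : ContDiff ℝ 1 (deriv f) := contdiff_deriv_one hf
  have claimA : ∀ t₀ ≥ (0:ℝ), (∀ s, 0 < s → s < t₀ → 0 < f s) →
      (∀ s ∈ Icc (0:ℝ) t₀, 1 ≤ deriv f s) ∧ (0 < t₀ → 0 < f t₀) := by
    intro t₀ ht₀ hpos
    have hmono : MonotoneOn (deriv f) (Icc 0 t₀) := by
      apply monotoneOn_of_deriv_nonneg (convex_Icc _ _) h1.continuous.continuousOn
        (h1.differentiable (by simp)).differentiableOn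
      intro x hx
      rw [interior_Icc] at hx
      rw [hode x hx.1.le]
      exact mul_nonneg (hknn x) (hpos x hx.1 hx.2).le
    have hd1 : ∀ s ∈ Icc (0:ℝ) t₀, 1 ≤ deriv f s := by
      intro s hs
      calc (1:ℝ) = deriv f 0 := hf1.symm
      _ ≤ deriv f s := hmono ⟨le_refl 0, ht₀⟩ hs hs.1
    refine ⟨hd1, fun h => ?_⟩
    have hsm : StrictMonoOn f (Icc 0 t₀) := by
      apply strictMonoOn_of_deriv_pos (convex_Icc _ _) hfd.continuous.continuousOn
      intro x hx; rw [interior_Icc] at hx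
      exact lt_of_lt_of_le one_pos (hd1 x ⟨hx.1.le, hx.2.le⟩)
    have := hsm (left_mem_Icc.2 ht₀) (right_mem_Icc.2 ht₀) h
    rwa [hf0] at this
  have hslope : Tendsto (fun t => f t / t) (nhdsWithin 0 (Ioi 0)) (nhds 1) :=
    slope_lim hfd hf0 hf1
  have hev : ∀ᶠ t in nhdsWithin 0 (Ioi 0), 0 < f t := by
    have : ∀ᶠ t in nhdsWithin 0 (Ioi 0), 0 < f t / t := by
      filter_upwards [hslope.eventually (eventually_gt_nhds one_pos)] with t ht
      linarith
    filter_upwards [this, self_mem_nhdsWithin] with t ht ht'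
    have ht0 : (0:ℝ) < t := ht'
    have h2 := mul_pos ht ht0
    rwa [div_mul_cancel₀ _ (ne_of_gt ht0)] at h2
  obtain ⟨δ, hδ0, hδs⟩ := mem_nhdsGT_iff_exists_Ioo_subset.1 hev
  have hδ0' : (0:ℝ) < δ := hδ0
  have hpos : ∀ t > (0:ℝ), 0 < f t := by
    by_contra hcon
    push_neg at hcon
    obtain ⟨t₁, ht₁, hft₁⟩ := hcon
    have hδt₁ : δ ≤ t₁ := by
      by_contra hlt
      push_neg at hlt
      exact absurd (hδs ⟨ht₁, hlt⟩) (not_lt.2 hft₁)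
    set Z : Set ℝ := Icc (δ/2) t₁ ∩ {t | f t ≤ 0} with hZ
    have hZc : IsCompact Z := isCompact_Icc.inter_right (isClosed_le hfd.continuous continuous_const)
    have hZne : Z.Nonempty := ⟨t₁, ⟨by linarith, le_refl _⟩, hft₁⟩
    set t₀ := sInf Z with ht₀def
    have ht₀Z : t₀ ∈ Z := hZc.sInf_mem hZne
    have ht₀pos : 0 < t₀ := lt_of_lt_of_le (by linarith) ht₀Z.1.1
    have hbelow : ∀ s, 0 < s → s < t₀ → 0 < f s := by
      intro s hs hst
      by_cases hcase : s < δ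
      · exact hδs ⟨hs, hcase⟩
      · push_neg at hcase
        by_contra hfs
        push_neg at hfs
        have hsZ : s ∈ Z := ⟨⟨by linarith, le_trans hst.le ht₀Z.1.2⟩, hfs⟩
        have : t₀ ≤ s := csInf_le hZc.bddBelow hsZ
        linarith
    have := (claimA t₀ ht₀pos.le hbelow).2 ht₀pos
    exact absurd this (not_lt.2 ht₀Z.2)
  refine ⟨hpos, fun t ht => ?_⟩
  exact (claimA t ht (fun s hs hst => hpos s hs)).1 t ⟨ht, le_refl t⟩

private lemma jacobi_cosh_lower (b f : ℝ → ℝ)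
    (hbmono : MonotoneOn b (Ici 0)) (hbnn : ∀ t ≥ (0:ℝ), 0 ≤ b t)
    (hf : ContDiff ℝ (⊤ : ℕ∞) f) (hode : ∀ t ≥ (0:ℝ), deriv (deriv f) t = (b t)^2 * f t)
    (hfnn : ∀ t ≥ (0:ℝ), 0 ≤ f t) (hf'nn : ∀ t ≥ (0:ℝ), 0 ≤ deriv f t)
    (r t : ℝ) (hr : 0 ≤ r) (hrt : r ≤ t) :
    f r * Real.cosh (b r * (t - r)) ≤ f t := by
  have hfd : Differentiable ℝ f := hf.differentiable (by simp)
  have h1 : ContDiff ℝ 1 (deriv f) := contdiff_deriv_one hf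
  set c := b r with hc
  have hc0 : 0 ≤ c := hbnn r hr
  set φ : ℝ → ℝ := fun u => Real.cosh (c * (u - r)) with hφdef
  set φ' : ℝ → ℝ := fun u => c * Real.sinh (c * (u - r)) with hφ'def
  have hφpos : ∀ s, 0 < φ s := fun s => Real.cosh_pos _
  have hφ : ∀ s, HasDerivAt φ (φ' s) s := by
    intro s
    have harg : HasDerivAt (fun u => c * (u - r)) c s := by
      simpa using ((hasDerivAt_id s).sub_const r).const_mul c
    have := (Real.hasDerivAt_cosh (c * (s - r))).comp s harg
    have h108 : HasDerivAt (Real.cosh ∘ fun u => c * (u - r)) (c * Real.sinh (c * (s - r))) s := by simpa [mul_comm] using this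
    exact h108
  have hφ' : ∀ s, HasDerivAt φ' (c ^ 2 * φ s) s := by
    intro s
    have harg : HasDerivAt (fun u => c * (u - r)) c s := by
      simpa using ((hasDerivAt_id s).sub_const r).const_mul c
    have := ((Real.hasDerivAt_sinh (c * (s - r))).comp s harg).const_mul c
    refine this.congr_deriv ?_
    simp [φ]; ring
  set W : ℝ → ℝ := fun s => φ s * deriv f s - f s * φ' s with hWdef
  have hW : ∀ s ≥ (0:ℝ), HasDerivAt W (((b s)^2 - c^2) * (φ s * f s)) s := by
    intro s hs
    have hf'' : HasDerivAt (deriv f) ((b s)^2 * f s) s := by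
      have := (h1.differentiable (by simp) s).hasDerivAt
      rwa [hode s hs] at this
    have := ((hφ s).mul hf'').sub ((hfd s).hasDerivAt.mul (hφ' s))
    refine this.congr_deriv ?_
    ring
  have hWr : W r = deriv f r := by
    simp [W, φ, φ']
  have hWmono : MonotoneOn W (Ici r) := by
    apply monotoneOn_of_deriv_nonneg (convex_Ici r)
    · exact (Continuous.sub ((Real.continuous_cosh.comp (continuous_const.mul (continuous_id.sub continuous_const))).mul h1.continuous) (hfd.continuous.mul (continuous_const.mul (Real.continuous_sinh.comp (continuous_const.mul (continuous_id.sub continuous_const)))))).continuousOn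
    · intro x hx
      rw [interior_Ici] at hx
      exact (hW x (le_trans hr (le_of_lt hx))).differentiableAt.differentiableWithinAt
    · intro x hx
      rw [interior_Ici] at hx
      have hx0 : (0:ℝ) ≤ x := le_trans hr hx.le
      rw [(hW x hx0).deriv]
      have hbx : c ≤ b x := hbmono (mem_Ici.2 hr) (mem_Ici.2 hx0) hx.le
      have : c^2 ≤ (b x)^2 := pow_le_pow_left₀ hc0 hbx 2
      exact mul_nonneg (by linarith) (mul_nonneg (hφpos x).le (hfnn x hx0))
  have hWnn : ∀ s ∈ Icc r t, 0 ≤ W s := by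
    intro s hs
    calc (0:ℝ) ≤ deriv f r := hf'nn r hr
    _ = W r := hWr.symm
    _ ≤ W s := hWmono (mem_Ici.2 le_rfl) (mem_Ici.2 hs.1) hs.1
  have hψmono : MonotoneOn (fun s => f s / φ s) (Icc r t) := by
    apply monotoneOn_of_deriv_nonneg (convex_Icc r t)
    · exact (hfd.continuous.div (Real.continuous_cosh.comp (continuous_const.mul (continuous_id.sub continuous_const))) (fun s => (hφpos s).ne')).continuousOn
    · intro x hx
      exact (((hfd x).hasDerivAt.div (hφ x) (hφpos x).ne').differentiableAt).differentiableWithinAt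
    · intro x hx
      rw [interior_Icc] at hx
      rw [((hfd x).hasDerivAt.fun_div (hφ x) (hφpos x).ne').deriv]
      apply div_nonneg _ (sq_nonneg _)
      have := hWnn x ⟨hx.1.le, hx.2.le⟩
      simpa [W, mul_comm] using this
  have hkey := hψmono (left_mem_Icc.2 hrt) (right_mem_Icc.2 hrt) hrt
  simp only [] at hkey
  have hφr : φ r = 1 := by simp [φ]
  rw [hφr, div_one] at hkey
  show f r * φ t ≤ f t
  calc f r * φ t ≤ (f t / φ t) * φ t := by
        apply mul_le_mul_of_nonneg_right hkey (hφpos t).le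
  _ = f t := div_mul_cancel₀ _ (hφpos t).ne'

private lemma exp_decay_integrable (c r : ℝ) (hc : 0 < c) :
    IntegrableOn (fun t => Real.exp (-(c * (t - r)))) (Ioi r) := by
  have : (fun t => Real.exp (-(c * (t - r)))) = fun t => Real.exp (c*r) * Real.exp (-c * t) := by
    ext t; rw [← Real.exp_add]; ring_nf
  rw [this]
  exact (exp_neg_integrableOn_Ioi r hc).const_mul _

private lemma integral_exp_decay (c r : ℝ) (hc : 0 < c) :
    ∫ t in Ioi r, Real.exp (-(c * (t - r))) = 1 / c := by
  have h : ∀ x ∈ Ioi r, HasDerivAt (fun t => -Real.exp (-(c * (t - r))) / c) (Real.exp (-(c * (x - r)))) x := by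
    intro x hx
    have harg : HasDerivAt (fun t => -(c * (t - r))) (-c) x := by
      simpa using (((hasDerivAt_id x).sub_const r).const_mul c).fun_neg
    have := ((Real.hasDerivAt_exp (-(c * (x - r)))).comp x harg).neg.div_const c
    refine this.congr_deriv ?_
    field_simp
  have hint : IntegrableOn (fun t => Real.exp (-(c * (t - r)))) (Ioi r) := exp_decay_integrable c r hc
  have hcont : ContinuousWithinAt (fun t => -Real.exp (-(c * (t - r))) / c) (Ici r) r := by
    apply Continuous.continuousWithinAt
    continuity
  have htend : Tendsto (fun t => -Real.exp (-(c * (t - r))) / c) atTop (nhds 0) := by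
    have h0 : Tendsto (fun t : ℝ => t - r) atTop atTop := tendsto_atTop_add_const_right atTop (-r) tendsto_id
    have h1 : Tendsto (fun t : ℝ => c * (t - r)) atTop atTop := Tendsto.const_mul_atTop hc h0
    have h2 : Tendsto (fun t : ℝ => Real.exp (-(c * (t - r)))) atTop (nhds 0) :=
      Real.tendsto_exp_neg_atTop_nhds_zero.comp h1
    have := (h2.neg).div_const c
    simpa using this
  have := integral_Ioi_of_hasDerivAt_of_tendsto hcont h hint htend
  rw [this]
  simp [neg_div]

/-- If `a ≤ b` are smooth increasing nonnegative functions with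
`∫₀^∞ (b² - a²)/b < ∞`, then the Jacobi solutions satisfy `f_b ≤ c f_a` for some `c > 0`. -/
theorem jacobi_comparison_of_integrable_curvature_gap
    (a b fa fb : ℝ → ℝ)
    (ha : ContDiff ℝ (⊤ : ℕ∞) a) (hb : ContDiff ℝ (⊤ : ℕ∞) b)
    (hamono : MonotoneOn a (Set.Ici (0:ℝ))) (hbmono : MonotoneOn b (Set.Ici (0:ℝ)))
    (ha0 : ∀ t ≥ (0:ℝ), 0 ≤ a t) (hab : ∀ t ≥ (0:ℝ), a t ≤ b t)
    (hbpos : ∀ t > (0:ℝ), 0 < b t)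
    (hfa : ContDiff ℝ (⊤ : ℕ∞) fa) (hfa0 : fa 0 = 0) (hfa1 : deriv fa 0 = 1)
    (hodea : ∀ t ≥ (0:ℝ), deriv (deriv fa) t = (a t) ^ 2 * fa t)
    (hfb : ContDiff ℝ (⊤ : ℕ∞) fb) (hfb0 : fb 0 = 0) (hfb1 : deriv fb 0 = 1)
    (hodeb : ∀ t ≥ (0:ℝ), deriv (deriv fb) t = (b t) ^ 2 * fb t)
    (hint : IntegrableOn (fun t => ((b t) ^ 2 - (a t) ^ 2) / b t) (Set.Ici (0:ℝ))) :
    ∃ c > (0:ℝ), ∀ t ≥ (0:ℝ), fb t ≤ c * fa t := by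
  have hac : Continuous a := ha.continuous
  have hbc : Continuous b := hb.continuous
  have hfac : Continuous fa := hfa.continuous
  have hfbc : Continuous fb := hfb.continuous
  have hfad : Differentiable ℝ fa := hfa.differentiable (by simp)
  have hfbd : Differentiable ℝ fb := hfb.differentiable (by simp)
  have hfa1' : ContDiff ℝ 1 (deriv fa) := contdiff_deriv_one hfa
  have hfb1' : ContDiff ℝ 1 (deriv fb) := contdiff_deriv_one hfb
  obtain ⟨hfapos, hfa'ge⟩ := jacobi_pos (fun t => (a t)^2) fa (fun t => sq_nonneg _) hfa hfa0 hfa1 hodea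
  obtain ⟨hfbpos, hfb'ge⟩ := jacobi_pos (fun t => (b t)^2) fb (fun t => sq_nonneg _) hfb hfb0 hfb1 hodeb
  have hbnn : ∀ t ≥ (0:ℝ), 0 ≤ b t := fun t ht => le_trans (ha0 t ht) (hab t ht)
  have hfann : ∀ t ≥ (0:ℝ), 0 ≤ fa t := by
    intro t ht
    rcases eq_or_lt_of_le ht with h | h
    · rw [← h, hfa0]
    · exact (hfapos t h).le
  have hfbnn : ∀ t ≥ (0:ℝ), 0 ≤ fb t := by
    intro t ht
    rcases eq_or_lt_of_le ht with h | h
    · rw [← h, hfb0]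
    · exact (hfbpos t h).le
  have hfamono : MonotoneOn fa (Ici 0) := by
    apply monotoneOn_of_deriv_nonneg (convex_Ici 0) hfac.continuousOn hfad.differentiableOn
    intro x hx
    rw [interior_Ici] at hx
    linarith [hfa'ge x (le_of_lt hx)]
  have hfbmono : MonotoneOn fb (Ici 0) := by
    apply monotoneOn_of_deriv_nonneg (convex_Ici 0) hfbc.continuousOn hfbd.differentiableOn
    intro x hx
    rw [interior_Ici] at hx
    linarith [hfb'ge x (le_of_lt hx)]
  have hcosh := jacobi_cosh_lower b fb hbmono hbnn hfb hodeb hfbnn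
    (fun t ht => le_trans zero_le_one (hfb'ge t ht))
  have hexp : ∀ r t : ℝ, 0 ≤ r → r ≤ t → fb r * Real.exp (b r * (t - r)) ≤ 2 * fb t := by
    intro r t hr hrt
    have h1 : Real.exp (b r * (t-r)) ≤ 2 * Real.cosh (b r * (t-r)) := by
      rw [Real.cosh_eq]
      have := Real.exp_pos (-(b r * (t-r)))
      linarith
    calc fb r * Real.exp (b r * (t-r)) ≤ fb r * (2 * Real.cosh (b r * (t-r))) :=
          mul_le_mul_of_nonneg_left h1 (hfbnn r hr)
    _ = 2 * (fb r * Real.cosh (b r * (t-r))) := by ring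
    _ ≤ 2 * fb t := by linarith [hcosh r t hr hrt]
  set I := ∫ t in Ici (0:ℝ), ((b t)^2 - (a t)^2) / b t with hIdef
  have hgapnn : ∀ r ∈ Ici (0:ℝ), 0 ≤ ((b r)^2 - (a r)^2) / b r := by
    intro r hr
    have h1 : a r ≤ b r := hab r hr
    have h2 : 0 ≤ a r := ha0 r hr
    apply div_nonneg _ (by linarith)
    nlinarith
  refine ⟨Real.exp (2 * I), Real.exp_pos _, ?_⟩
  intro T hT
  rcases eq_or_lt_of_le hT with h0 | hTpos
  · rw [← h0, hfb0, hfa0, mul_zero]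
  -- Wronskian
  set w : ℝ → ℝ := fun s => ((b s)^2 - (a s)^2) * (fa s * fb s) with hwdef
  set W : ℝ → ℝ := fun s => fa s * deriv fb s - fb s * deriv fa s with hWdef
  have hwc : Continuous w := by
    apply Continuous.mul
    · exact ((hbc.pow 2).sub (hac.pow 2))
    · exact hfac.mul hfbc
  have hWd : ∀ s ≥ (0:ℝ), HasDerivAt W (w s) s := by
    intro s hs
    have hfb'' : HasDerivAt (deriv fb) ((b s)^2 * fb s) s := by
      have := (hfb1'.differentiable (by simp) s).hasDerivAt
      rwa [hodeb s hs] at this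
    have hfa'' : HasDerivAt (deriv fa) ((a s)^2 * fa s) s := by
      have := (hfa1'.differentiable (by simp) s).hasDerivAt
      rwa [hodea s hs] at this
    have := ((hfad s).hasDerivAt.mul hfb'').sub ((hfbd s).hasDerivAt.mul hfa'')
    refine this.congr_deriv ?_
    ring
  have hWFTC : ∀ t, 0 ≤ t → W t = ∫ s in Ioc (0:ℝ) t, w s := by
    intro t ht
    have h1 : ∫ s in (0:ℝ)..t, w s = W t - W 0 := by
      apply intervalIntegral.integral_eq_sub_of_hasDerivAt
      · intro x hx
        rw [uIcc_of_le ht] at hx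
        exact hWd x hx.1
      · exact hwc.intervalIntegrable 0 t
    have hW0 : W 0 = 0 := by simp [W, hfa0, hfb0]
    rw [intervalIntegral.integral_of_le ht, hW0, sub_zero] at h1
    exact h1.symm
  -- key estimate
  have key : ∀ ε, 0 < ε → ε ≤ T → fb T / fa T ≤ (fb ε / fa ε) * Real.exp (2 * I) := by
    intro ε hε hεT
    set v : ℝ → ℝ := fun t => deriv fb t / fb t - deriv fa t / fa t with hvdef
    have hvcont : ContinuousOn v (Icc ε T) := by
      apply ContinuousOn.sub
      · exact (hfb1'.continuous.continuousOn.div hfbc.continuousOn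
          (fun x hx => (hfbpos x (lt_of_lt_of_le hε hx.1)).ne'))
      · exact (hfa1'.continuous.continuousOn.div hfac.continuousOn
          (fun x hx => (hfapos x (lt_of_lt_of_le hε hx.1)).ne'))
    have hlogd : ∀ x ∈ uIcc ε T, HasDerivAt (fun s => Real.log (fb s) - Real.log (fa s)) (v x) x := by
      intro x hx
      rw [uIcc_of_le hεT] at hx
      have hxpos : 0 < x := lt_of_lt_of_le hε hx.1
      have h1 : HasDerivAt (fun s => Real.log (fb s)) (deriv fb x / fb x) x := by
        have := (Real.hasDerivAt_log (hfbpos x hxpos).ne').comp x (hfbd x).hasDerivAt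
        simpa [div_eq_inv_mul, Function.comp_def] using this
      have h2 : HasDerivAt (fun s => Real.log (fa s)) (deriv fa x / fa x) x := by
        have := (Real.hasDerivAt_log (hfapos x hxpos).ne').comp x (hfad x).hasDerivAt
        simpa [div_eq_inv_mul, Function.comp_def] using this
      exact h1.sub h2
    have hFTC : ∫ t in ε..T, v t =
        (Real.log (fb T) - Real.log (fa T)) - (Real.log (fb ε) - Real.log (fa ε)) := by
      apply intervalIntegral.integral_eq_sub_of_hasDerivAt hlogd
      apply ContinuousOn.intervalIntegrable
      rwa [uIcc_of_le hεT]
    have hbound : ∫ t in ε..T, v t ≤ 2 * I := by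
      classical
      set q : ℝ → ℝ := fun r => 2 * ((b r)^2 - (a r)^2) with hqdef
      have hqc : Continuous q := by
        apply Continuous.mul continuous_const
        exact ((hbc.pow 2).sub (hac.pow 2))
      set g : ℝ × ℝ → ℝ := fun p => q p.2 * Real.exp (-(b p.2 * (p.1 - p.2))) with hgdef
      have hgc : Continuous g := by
        apply Continuous.mul (hqc.comp continuous_snd)
        apply Real.continuous_exp.comp
        apply Continuous.neg
        exact (hbc.comp continuous_snd).mul (continuous_fst.sub continuous_snd)
      set S : Set (ℝ × ℝ) := {p | p.2 ≤ p.1} with hSdef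
      have hSm : MeasurableSet S := measurableSet_le measurable_snd measurable_fst
      set F : ℝ × ℝ → ℝ := S.indicator g with hFdef
      obtain ⟨M, hM⟩ := (isCompact_Icc : IsCompact (Icc (0:ℝ) T)).exists_bound_of_continuousOn
        hqc.continuousOn
      have hMnn : 0 ≤ M := le_trans (norm_nonneg _) (hM 0 (left_mem_Icc.2 hT))
      have hFint : Integrable F ((volume.restrict (Ioc ε T)).prod (volume.restrict (Ioc (0:ℝ) T))) := by
        haveI : IsFiniteMeasure (volume.restrict (Ioc ε T)) :=
          ⟨by rw [Measure.restrict_apply_univ]; exact measure_Ioc_lt_top⟩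
        haveI : IsFiniteMeasure (volume.restrict (Ioc (0:ℝ) T)) :=
          ⟨by rw [Measure.restrict_apply_univ]; exact measure_Ioc_lt_top⟩
        apply Integrable.mono' (integrable_const M)
        · exact (hgc.stronglyMeasurable.indicator hSm).aestronglyMeasurable
        · rw [Measure.prod_restrict]
          refine (ae_restrict_iff' (measurableSet_Ioc.prod measurableSet_Ioc)).2 (ae_of_all _ ?_)
          rintro ⟨t, r⟩ hmem
          rw [Set.mem_prod] at hmem
          obtain ⟨htm, hrm⟩ := hmem
          by_cases hS' : (t, r) ∈ S
          · rw [hFdef, indicator_of_mem hS']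
            have hbr : 0 ≤ b r := hbnn r hrm.1.le
            have hexp1 : Real.exp (-(b r * (t - r))) ≤ 1 := by
              rw [Real.exp_le_one_iff]
              have htr : (0:ℝ) ≤ t - r := sub_nonneg.2 hS'
              nlinarith
            calc ‖g (t, r)‖ = ‖q r‖ * ‖Real.exp (-(b r * (t - r)))‖ := by
                  rw [hgdef]; exact norm_mul _ _
            _ ≤ M * 1 := by
                apply mul_le_mul (hM r ⟨hrm.1.le, hrm.2⟩) _ (norm_nonneg _) hMnn
                rw [Real.norm_eq_abs, abs_of_pos (Real.exp_pos _)]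
                exact hexp1
            _ = M := mul_one M
          · rw [hFdef, indicator_of_notMem hS']
            simpa using hMnn
      have hqnn : ∀ r, 0 ≤ r → 0 ≤ q r := by
        intro r hr
        have h1 : a r ≤ b r := hab r hr
        have h2 : 0 ≤ a r := ha0 r hr
        show 0 ≤ 2 * ((b r)^2 - (a r)^2)
        nlinarith
      -- pointwise bound
      have hVrep : ∀ t ∈ Ioc ε T, v t ≤ ∫ r in Ioc (0:ℝ) T, F (t, r) := by
        intro t ht
        have htpos : 0 < t := lt_trans hε ht.1
        have hfat := hfapos t htpos
        have hfbt := hfbpos t htpos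
        have hv1 : v t = W t / (fa t * fb t) := by
          rw [hvdef, hWdef]
          field_simp
        have hFr : (fun r => F (t, r)) = Set.indicator (Iic t) (fun r => g (t, r)) := by
          funext r
          rw [hFdef]
          by_cases h' : r ≤ t
          · rw [indicator_of_mem (by exact h' : (t, r) ∈ S), indicator_of_mem (mem_Iic.2 h')]
          · rw [indicator_of_notMem (by exact h' : ¬ (t, r) ∈ S), indicator_of_notMem (by simpa using h')]
        have hIicinter : Iic t ∩ Ioc (0:ℝ) T = Ioc (0:ℝ) t := by
          ext x
          simp only [mem_inter_iff, mem_Iic, mem_Ioc]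
          constructor
          · rintro ⟨h1, h2, h3⟩; exact ⟨h2, h1⟩
          · rintro ⟨h1, h2⟩; exact ⟨h2, h1, le_trans h2 ht.2⟩
        have hrhs : ∫ r in Ioc (0:ℝ) T, F (t, r) = ∫ r in Ioc (0:ℝ) t, g (t, r) := by
          rw [hFr, integral_indicator measurableSet_Iic, Measure.restrict_restrict measurableSet_Iic,
            hIicinter]
        rw [hrhs, hv1, hWFTC t htpos.le]
        rw [eq_comm] at hIicinter
        calc (∫ s in Ioc (0:ℝ) t, w s) / (fa t * fb t)
            = ∫ s in Ioc (0:ℝ) t, w s / (fa t * fb t) := (integral_div _ _).symm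
        _ ≤ ∫ r in Ioc (0:ℝ) t, g (t, r) := by
            apply setIntegral_mono_on
            · exact (hwc.integrableOn_Ioc).div_const _
            · exact ((hgc.comp (Continuous.prodMk_right t)).integrableOn_Ioc)
            · exact measurableSet_Ioc
            · intro r hr
              have hr0 : 0 < r := hr.1
              have hrt : r ≤ t := hr.2
              have hfar := hfann r hr0.le
              have hfbr := hfbnn r hr0.le
              have h1 : fa r ≤ fa t := hfamono (mem_Ici.2 hr0.le) (mem_Ici.2 htpos.le) hrt
              have h2 : fb r * Real.exp (b r * (t - r)) ≤ 2 * fb t := hexp r t hr0.le hrt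
              have hD : 0 < fa t * fb t := mul_pos hfat hfbt
              rw [hwdef, hgdef, div_le_iff₀ hD]
              have hgr : 0 ≤ (b r)^2 - (a r)^2 := by
                have := hqnn r hr0.le
                simp only [hqdef] at this
                linarith
              have h3 : fb r ≤ 2 * fb t * Real.exp (-(b r * (t - r))) := by
                have hpos := Real.exp_pos (-(b r * (t - r)))
                have := mul_le_mul_of_nonneg_right h2 hpos.le
                rwa [mul_assoc, ← Real.exp_add, add_neg_cancel, Real.exp_zero, mul_one] at this
              have h4 : fa r * fb r ≤ fa t * (2 * fb t * Real.exp (-(b r * (t - r)))) :=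
                mul_le_mul h1 h3 hfbr hfat.le
              calc ((b r)^2 - (a r)^2) * (fa r * fb r)
                  ≤ ((b r)^2 - (a r)^2) * (fa t * (2 * fb t * Real.exp (-(b r * (t - r))))) :=
                    mul_le_mul_of_nonneg_left h4 hgr
              _ = q r * Real.exp (-(b r * (t - r))) * (fa t * fb t) := by rw [hqdef]; ring
      have hvint : IntegrableOn v (Ioc ε T) := by
        apply IntegrableOn.mono_set _ Ioc_subset_Icc_self
        exact hvcont.integrableOn_Icc
      have step2 : ∫ t in Ioc ε T, v t ≤ ∫ t in Ioc ε T, (∫ r in Ioc (0:ℝ) T, F (t, r)) := by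
        apply setIntegral_mono_on hvint hFint.integral_prod_left measurableSet_Ioc hVrep
      have step3 : ∫ t in Ioc ε T, (∫ r in Ioc (0:ℝ) T, F (t, r)) =
          ∫ r in Ioc (0:ℝ) T, (∫ t in Ioc ε T, F (t, r)) := by
        exact integral_integral_swap hFint
      have step4 : ∫ r in Ioc (0:ℝ) T, (∫ t in Ioc ε T, F (t, r)) ≤
          ∫ r in Ioc (0:ℝ) T, 2 * (((b r)^2 - (a r)^2) / b r) := by
        apply setIntegral_mono_on hFint.integral_prod_right _ measurableSet_Ioc _
        · have h1 : IntegrableOn (fun r => ((b r)^2 - (a r)^2) / b r) (Ioc (0:ℝ) T) :=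
            hint.mono_set (fun x hx => hx.1.le)
          exact h1.const_mul 2
        · intro r hr
          have hbr : 0 < b r := hbpos r hr.1
          have hFr2 : (fun t => F (t, r)) = Set.indicator (Ici r) (fun t => g (t, r)) := by
            funext t
            rw [hFdef]
            by_cases h' : r ≤ t
            · rw [indicator_of_mem (by exact h' : (t, r) ∈ S), indicator_of_mem (mem_Ici.2 h')]
            · rw [indicator_of_notMem (by exact h' : ¬ (t, r) ∈ S), indicator_of_notMem (by simpa using h')]
          have hgint : IntegrableOn (fun t => g (t, r)) (Ioi r) := by
            rw [hgdef]
            exact (exp_decay_integrable (b r) r hbr).const_mul (q r)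
          calc ∫ t in Ioc ε T, F (t, r)
              = ∫ t in Ici r ∩ Ioc ε T, g (t, r) := by
                rw [hFr2, integral_indicator measurableSet_Ici,
                  Measure.restrict_restrict measurableSet_Ici]
          _ ≤ ∫ t in Ioi r, g (t, r) := by
                apply setIntegral_mono_set hgint
                · refine (ae_restrict_iff' measurableSet_Ioi).2 (ae_of_all _ ?_)
                  intro t htr
                  rw [hgdef]
                  exact mul_nonneg (hqnn r hr.1.le) (Real.exp_pos _).le
                · have hsub : (Ici r ∩ Ioc ε T : Set ℝ) ≤ᵐ[volume] Ici r :=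
                    HasSubset.Subset.eventuallyLE inter_subset_left
                  exact hsub.trans (Filter.EventuallyEq.le (Ioi_ae_eq_Ici (a := r)).symm)
          _ = q r * (1 / b r) := by
                simp only [hgdef]
                rw [integral_const_mul, integral_exp_decay (b r) r hbr]
          _ = 2 * (((b r)^2 - (a r)^2) / b r) := by
                rw [hqdef, mul_one_div, mul_div_assoc]
      have step5 : ∫ r in Ioc (0:ℝ) T, 2 * (((b r)^2 - (a r)^2) / b r) ≤ 2 * I := by
        rw [integral_const_mul]
        apply mul_le_mul_of_nonneg_left _ (by norm_num : (0:ℝ) ≤ 2)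
        rw [hIdef]
        apply setIntegral_mono_set hint
        · exact (ae_restrict_iff' measurableSet_Ici).2 (ae_of_all _ hgapnn)
        · exact HasSubset.Subset.eventuallyLE (fun x hx => hx.1.le)
      calc ∫ t in ε..T, v t = ∫ t in Ioc ε T, v t := intervalIntegral.integral_of_le hεT
      _ ≤ ∫ t in Ioc ε T, (∫ r in Ioc (0:ℝ) T, F (t, r)) := step2
      _ = ∫ r in Ioc (0:ℝ) T, (∫ t in Ioc ε T, F (t, r)) := step3
      _ ≤ ∫ r in Ioc (0:ℝ) T, 2 * (((b r)^2 - (a r)^2) / b r) := step4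
      _ ≤ 2 * I := step5
    have hfbT := hfbpos T hTpos
    have hfaT := hfapos T hTpos
    have hfbε := hfbpos ε hε
    have hfaε := hfapos ε hε
    have h3 : Real.log (fb T / fa T) ≤ Real.log (fb ε / fa ε) + 2 * I := by
      rw [Real.log_div hfbT.ne' hfaT.ne', Real.log_div hfbε.ne' hfaε.ne']
      have := hFTC ▸ hbound
      linarith
    calc fb T / fa T = Real.exp (Real.log (fb T / fa T)) :=
          (Real.exp_log (div_pos hfbT hfaT)).symm
    _ ≤ Real.exp (Real.log (fb ε / fa ε) + 2 * I) := Real.exp_le_exp.2 h3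
    _ = (fb ε / fa ε) * Real.exp (2 * I) := by
          rw [Real.exp_add, Real.exp_log (div_pos hfbε hfaε)]
  -- pass to the limit ε → 0⁺
  have hratio : Tendsto (fun ε => fb ε / fa ε) (nhdsWithin 0 (Ioi 0)) (nhds 1) := by
    have h1 := slope_lim hfbd hfb0 hfb1
    have h2 := slope_lim hfad hfa0 hfa1
    have h3 := h1.div h2 one_ne_zero
    rw [div_one] at h3
    apply h3.congr'
    filter_upwards [self_mem_nhdsWithin] with x hx
    exact div_div_div_cancel_right₀ (ne_of_gt (mem_Ioi.1 hx)) _ _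
  have hfaT : 0 < fa T := hfapos T hTpos
  have hfinal : fb T / fa T ≤ Real.exp (2 * I) := by
    have hev : ∀ᶠ ε in nhdsWithin 0 (Ioi 0), fb T / fa T ≤ (fb ε / fa ε) * Real.exp (2 * I) := by
      filter_upwards [Ioc_mem_nhdsGT_of_mem (⟨le_refl (0:ℝ), hTpos⟩ : (0:ℝ) ∈ Ico 0 T)] with ε hε
      exact key ε hε.1 hε.2
    have hlim : Tendsto (fun ε => (fb ε / fa ε) * Real.exp (2 * I)) (nhdsWithin 0 (Ioi 0))
        (nhds (1 * Real.exp (2 * I))) := hratio.mul tendsto_const_nhds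
    have := ge_of_tendsto hlim hev
    rwa [one_mul] at this
  rw [div_le_iff₀ hfaT] at hfinal
  exact hfinal
end

section
/- Let a : [0,∞) → [0,∞) be smooth, fix t ≥ 0, and let f be the solution of f''(s) = a(t)² f(s) on [t,∞) with f(t) = f_a(t) > 0 and f'(t) = f_a'(t) ≥ 0, where a is increasing. Then for all s ≥ t one has f_a(s) ≥ f(s) = f_a(t) cosh(a(t)(s−t)) + (f_a'(t)/a(t)) sinh(a(t)(s−t)) ≥ f_a(t) cosh(a(t)(s−t)) (interpreting the middle term as f_a(t) + f_a'(t)(s−t) when a(t) = 0). -/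
open Real Set

private lemma fa_pos_on
    (a fa : ℝ → ℝ) (t : ℝ) (ht : 0 ≤ t)
    (hfa : ContDiff ℝ (⊤ : ℕ∞) fa)
    (hode : ∀ s ≥ (0:ℝ), deriv (deriv fa) s = (a s) ^ 2 * fa s)
    (hpos : 0 < fa t) (hder : 0 ≤ deriv fa t) :
    ∀ s ≥ t, 0 < fa s := by
  have hd1 : Differentiable ℝ fa := (hfa.of_le (by simp)).differentiable (n := 1) (by norm_num)
  have hd2 : Differentiable ℝ (deriv fa) :=
    ((contDiff_infty_iff_deriv.mp (hfa.of_le (by simp))).2).differentiable (by simp)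
  by_contra h
  push_neg at h
  obtain ⟨s0, hs0t, hs0⟩ := h
  set Z : Set ℝ := Ici t ∩ fa ⁻¹' Iic 0 with hZ
  have hZc : IsClosed Z := isClosed_Ici.inter (isClosed_Iic.preimage hd1.continuous)
  have hZne : Z.Nonempty := ⟨s0, hs0t, by simpa using hs0⟩
  have hZbdd : BddBelow Z := ⟨t, fun x hx => hx.1⟩
  set u := sInf Z with hu
  have huZ : u ∈ Z := hZc.csInf_mem hZne hZbdd
  have htu : t ≤ u := huZ.1
  have hfau : fa u ≤ 0 := huZ.2
  have htu' : t < u := by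
    rcases eq_or_lt_of_le htu with h | h
    · exact absurd (h ▸ hfau) (not_le.mpr hpos)
    · exact h
  have hIco : ∀ x ∈ Ico t u, 0 < fa x := by
    intro x hx
    by_contra hneg
    push_neg at hneg
    have hxZ : x ∈ Z := ⟨hx.1, hneg⟩
    exact absurd (csInf_le hZbdd hxZ) (not_le.mpr hx.2)
  have hmono' : MonotoneOn (deriv fa) (Icc t u) := by
    apply monotoneOn_of_deriv_nonneg (convex_Icc t u) hd2.continuous.continuousOn
      (hd2.differentiableOn.mono interior_subset)
    intro x hx
    rw [interior_Icc] at hx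
    have hx0 : (0:ℝ) ≤ x := le_trans ht hx.1.le
    rw [hode x hx0]
    exact mul_nonneg (sq_nonneg _) (hIco x ⟨hx.1.le, hx.2⟩).le
  have hder' : ∀ x ∈ Icc t u, 0 ≤ deriv fa x := fun x hx =>
    le_trans hder (hmono' (left_mem_Icc.mpr htu) hx hx.1)
  have hmono : MonotoneOn fa (Icc t u) := by
    apply monotoneOn_of_deriv_nonneg (convex_Icc t u) hd1.continuous.continuousOn
      (hd1.differentiableOn.mono interior_subset)
    intro x hx
    exact hder' x (interior_subset hx)
  have := hmono (left_mem_Icc.mpr htu) (right_mem_Icc.mpr htu) htu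
  linarith

private lemma sturm_key
    (a fa g g' g'' : ℝ → ℝ) (t : ℝ)
    (hfa : ContDiff ℝ (⊤ : ℕ∞) fa)
    (hode : ∀ s ≥ t, deriv (deriv fa) s = (a s) ^ 2 * fa s)
    (hfanonneg : ∀ s ≥ t, 0 ≤ fa s)
    (hg : ∀ s, HasDerivAt g (g' s) s)
    (hg' : ∀ s, HasDerivAt g' (g'' s) s)
    (hgt : g t = fa t) (hg't : g' t = deriv fa t)
    (hfat : 0 < fa t)
    (hgpos : ∀ s ≥ t, 0 < g s)
    (hcmp : ∀ s ≥ t, g'' s ≤ (a s)^2 * g s) :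
    ∀ s ≥ t, g s ≤ fa s := by
  have hd1 : Differentiable ℝ fa := (hfa.of_le (by simp)).differentiable (n := 1) (by norm_num)
  have hd2 : Differentiable ℝ (deriv fa) :=
    ((contDiff_infty_iff_deriv.mp (hfa.of_le (by simp))).2).differentiable (by simp)
  have hgdiff : Differentiable ℝ g := fun x => (hg x).differentiableAt
  have hg'diff : Differentiable ℝ g' := fun x => (hg' x).differentiableAt
  set W : ℝ → ℝ := fun s => deriv fa s * g s - fa s * g' s with hWdef
  have hWd : ∀ s, HasDerivAt W (deriv (deriv fa) s * g s - fa s * g'' s) s := by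
    intro s
    have h1 := (((hd2 s).hasDerivAt.mul (hg s)).sub (((hd1 s).hasDerivAt).mul (hg' s)))
    refine h1.congr_deriv ?_
    ring
  have hWdiff : Differentiable ℝ W := (hd2.mul hgdiff).sub (hd1.mul hg'diff)
  have hWmono : MonotoneOn W (Ici t) := by
    apply monotoneOn_of_deriv_nonneg (convex_Ici t) hWdiff.continuous.continuousOn
      (hWdiff.differentiableOn.mono interior_subset)
    intro x hx
    rw [interior_Ici] at hx
    rw [(hWd x).deriv, hode x hx.le]
    have h1 : fa x * g'' x ≤ fa x * ((a x)^2 * g x) :=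
      mul_le_mul_of_nonneg_left (hcmp x hx.le) (hfanonneg x hx.le)
    nlinarith
  have hWt : W t = 0 := by
    simp only [hWdef, hgt, hg't]
    ring
  have hWnonneg : ∀ s ≥ t, 0 ≤ W s := by
    intro s hs
    calc (0:ℝ) = W t := hWt.symm
    _ ≤ W s := hWmono self_mem_Ici hs hs
  have hqmono : MonotoneOn (fun s => fa s / g s) (Ici t) := by
    apply monotoneOn_of_deriv_nonneg (convex_Ici t)
      (ContinuousOn.div hd1.continuous.continuousOn hgdiff.continuous.continuousOn
        (fun x hx => (hgpos x hx).ne'))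
    · intro x hx
      rw [interior_Ici] at hx
      exact ((hd1 x).div (hgdiff x) (hgpos x hx.le).ne').differentiableWithinAt
    · intro x hx
      rw [interior_Ici] at hx
      have hgx := hgpos x hx.le
      have hq : HasDerivAt (fun s => fa s / g s)
          ((deriv fa x * g x - fa x * g' x) / g x ^ 2) x :=
        (hd1 x).hasDerivAt.div (hg x) hgx.ne'
      have hqd := hq.deriv
      rw [show (fun s => fa s / g s) = fa / g from rfl] at hqd
      rw [hqd]
      exact div_nonneg (hWnonneg x hx.le) (by positivity)
  intro s hs
  have h1 : fa t / g t ≤ fa s / g s := hqmono self_mem_Ici hs hs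
  rw [hgt, div_self hfat.ne'] at h1
  exact (one_le_div (hgpos s hs)).mp h1

/-- Sturm-type comparison: for increasing `a`, the Jacobi solution `f_a` dominates, on `[t,∞)`,
the solution of the constant-coefficient equation `f'' = a(t)² f` with the same data at `t`. -/
theorem jacobi_sturm_comparison_from_t
    (a fa : ℝ → ℝ) (t : ℝ) (ht : 0 ≤ t)
    (ha : ContDiff ℝ (⊤ : ℕ∞) a) (hamono : MonotoneOn a (Set.Ici (0:ℝ)))
    (ha0 : ∀ s ≥ (0:ℝ), 0 ≤ a s)
    (hfa : ContDiff ℝ (⊤ : ℕ∞) fa) (hfa0 : fa 0 = 0) (hfa1 : deriv fa 0 = 1)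
    (hode : ∀ s ≥ (0:ℝ), deriv (deriv fa) s = (a s) ^ 2 * fa s)
    (hpos : 0 < fa t) (hder : 0 ≤ deriv fa t) :
    ∀ s ≥ t,
      fa t * Real.cosh (a t * (s - t)) ≤
        (if a t = 0 then fa t + deriv fa t * (s - t)
         else fa t * Real.cosh (a t * (s - t)) + (deriv fa t / a t) * Real.sinh (a t * (s - t))) ∧
      (if a t = 0 then fa t + deriv fa t * (s - t)
         else fa t * Real.cosh (a t * (s - t)) + (deriv fa t / a t) * Real.sinh (a t * (s - t)))
        ≤ fa s := by
  have hfapos : ∀ s ≥ t, 0 < fa s := fa_pos_on a fa t ht hfa hode hpos hder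
  have hfann : ∀ s ≥ t, 0 ≤ fa s := fun s hs => (hfapos s hs).le
  have hodet : ∀ s ≥ t, deriv (deriv fa) s = (a s) ^ 2 * fa s :=
    fun s hs => hode s (le_trans ht hs)
  by_cases hc : a t = 0
  · -- linear comparison function
    have hg : ∀ s, HasDerivAt (fun s => fa t + deriv fa t * (s - t)) (deriv fa t) s := by
      intro s
      have := (((hasDerivAt_id s).sub_const t).const_mul (deriv fa t)).const_add (fa t)
      simpa using this
    have hgpos : ∀ s ≥ t, 0 < fa t + deriv fa t * (s - t) := fun s hs =>
      add_pos_of_pos_of_nonneg hpos (mul_nonneg hder (sub_nonneg.mpr hs))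
    have hkey := sturm_key a fa (fun s => fa t + deriv fa t * (s - t))
      (fun _ => deriv fa t) (fun _ => 0) t hfa hodet hfann hg
      (fun s => hasDerivAt_const s _) (by ring) rfl hpos hgpos
      (fun s hs => mul_nonneg (sq_nonneg _) (hgpos s hs).le)
    intro s hs
    simp only [if_pos hc]
    refine ⟨?_, hkey s hs⟩
    rw [hc]
    simp only [zero_mul, Real.cosh_zero, mul_one]
    nlinarith [mul_nonneg hder (sub_nonneg.mpr hs)]
  · have hcpos : 0 < a t := lt_of_le_of_ne (ha0 t ht) (Ne.symm hc)
    have hu : ∀ s, HasDerivAt (fun s => a t * (s - t)) (a t) s := by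
      intro s
      simpa using ((hasDerivAt_id s).sub_const t).const_mul (a t)
    set g : ℝ → ℝ := fun s =>
      fa t * Real.cosh (a t * (s - t)) + (deriv fa t / a t) * Real.sinh (a t * (s - t)) with hgdef
    set g' : ℝ → ℝ := fun s =>
      fa t * a t * Real.sinh (a t * (s - t)) + deriv fa t * Real.cosh (a t * (s - t)) with hg'def
    have hg : ∀ s, HasDerivAt g (g' s) s := by
      intro s
      have h1 := ((hu s).cosh.const_mul (fa t)).add ((hu s).sinh.const_mul (deriv fa t / a t))
      refine h1.congr_deriv ?_
      simp only [hg'def]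
      field_simp
    have hg' : ∀ s, HasDerivAt g' ((a t)^2 * g s) s := by
      intro s
      have h1 := ((hu s).sinh.const_mul (fa t * a t)).add ((hu s).cosh.const_mul (deriv fa t))
      refine h1.congr_deriv ?_
      simp only [hgdef]
      field_simp
    have hgt : g t = fa t := by simp [hgdef]
    have hg't : g' t = deriv fa t := by simp [hg'def]
    have hgpos : ∀ s ≥ t, 0 < g s := by
      intro s hs
      have h1 : 1 ≤ Real.cosh (a t * (s - t)) := Real.one_le_cosh _
      have h2 : 0 ≤ Real.sinh (a t * (s - t)) :=
        Real.sinh_nonneg_iff.mpr (mul_nonneg hcpos.le (sub_nonneg.mpr hs))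
      have h3 : 0 ≤ deriv fa t / a t := div_nonneg hder hcpos.le
      simp only [hgdef]
      nlinarith
    have hcmp : ∀ s ≥ t, (a t)^2 * g s ≤ (a s)^2 * g s := by
      intro s hs
      have hs0 : (0:ℝ) ≤ s := le_trans ht hs
      have hats : a t ≤ a s := hamono (mem_Ici.mpr ht) (mem_Ici.mpr hs0) hs
      exact mul_le_mul_of_nonneg_right (pow_le_pow_left₀ (ha0 t ht) hats 2) (hgpos s hs).le
    have hkey := sturm_key a fa g g' (fun s => (a t)^2 * g s) t hfa hodet hfann hg hg'
      hgt hg't hpos hgpos hcmp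
    intro s hs
    simp only [if_neg hc]
    constructor
    · have h2 : 0 ≤ Real.sinh (a t * (s - t)) :=
        Real.sinh_nonneg_iff.mpr (mul_nonneg hcpos.le (sub_nonneg.mpr hs))
      have h3 : 0 ≤ deriv fa t / a t := div_nonneg hder hcpos.le
      nlinarith
    · exact hkey s hs
end

section
/- Suppose a : [0,∞) → [0,∞) satisfies a(t)² ≥ (1+ε)/(t² log t) for some ε > 0 and all t ≥ R₀ > 1, and let f_a solve f_a(0)=0, f_a'(0)=1, f_a''=a² f_a. Then for every ε₁ with 0 < ε₁ < ε there exists R₁ ≥ R₀ such that for all t ≥ R₁ one has f_a(t) ≥ t (log t)^{1+ε₁} and f_a'(t)/f_a(t) ≥ 1/t + (1+ε₁)/(t log t). -/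
open Real Set


lemma choi_aux_pos (a fa : ℝ → ℝ)
    (hfa : ContDiff ℝ (⊤ : ℕ∞) fa) (hfa0 : fa 0 = 0) (hfa1 : deriv fa 0 = 1)
    (hode : ∀ t ≥ (0:ℝ), deriv (deriv fa) t = (a t) ^ 2 * fa t) :
    ∀ t ≥ (0:ℝ), 0 ≤ fa t := by
  have hf1 : Differentiable ℝ fa := hfa.differentiable (by simp)
  have hfa' : ContDiff ℝ ((⊤:ℕ∞):WithTop ℕ∞) fa := hfa.of_le (mod_cast le_top)
  have hf2 : Differentiable ℝ (deriv fa) := (contDiff_infty_iff_deriv.mp hfa').2.differentiable (by simp)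
  -- positivity near 0
  have hd0 : HasDerivAt fa 1 0 := hfa1 ▸ (hf1 0).hasDerivAt
  have hslope : Filter.Tendsto (slope fa 0) (nhdsWithin 0 (Set.Ioi 0)) (nhds 1) :=
    (hasDerivAt_iff_tendsto_slope.mp hd0).mono_left
      (nhdsWithin_mono 0 (fun x hx => ne_of_gt hx))
  have hev : ∀ᶠ s in nhdsWithin 0 (Set.Ioi 0), 0 < slope fa 0 s :=
    hslope.eventually (eventually_gt_nhds one_pos)
  obtain ⟨δ, hδmem, hδ⟩ := mem_nhdsGT_iff_exists_Ioo_subset.mp hev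
  have hδ0 : (0:ℝ) < δ := hδmem
  have hpos_near : ∀ s ∈ Set.Ioo (0:ℝ) δ, 0 < fa s := by
    intro s hs
    have := hδ hs
    simp only [Set.mem_setOf_eq, slope_def_field] at this
    rw [hfa0] at this
    have hs0 : 0 < s := hs.1
    have : 0 < fa s / s := by simpa using this
    exact (div_pos_iff.mp this).resolve_right (fun h => absurd h.2 (not_lt.mpr hs0.le)) |>.1
  by_contra hcon
  push_neg at hcon
  obtain ⟨t₁, ht₁0, ht₁⟩ := hcon
  set E : Set ℝ := {t | t ∈ Set.Icc 0 t₁ ∧ fa t < 0} with hE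
  have hEne : E.Nonempty := ⟨t₁, ⟨⟨ht₁0, le_rfl⟩, ht₁⟩⟩
  have hEbdd : BddBelow E := ⟨0, fun x hx => hx.1.1⟩
  set T := sInf E with hT
  have hTmemIcc : ∀ x ∈ E, T ≤ x := fun x hx => csInf_le hEbdd hx
  have hT0 : 0 ≤ T := le_csInf hEne (fun x hx => hx.1.1)
  have hTcl : fa T ≤ 0 := by
    have h1 : T ∈ closure E := csInf_mem_closure hEne hEbdd
    have h2 : closure E ⊆ {t | fa t ≤ 0} := closure_minimal
      (fun x hx => le_of_lt hx.2) (isClosed_le (hf1.continuous) continuous_const)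
    exact h2 h1
  have hTδ : δ ≤ T := by
    by_contra hlt
    push_neg at hlt
    obtain ⟨e, heE, heδ⟩ := exists_lt_of_csInf_lt hEne hlt
    have he0 : 0 < e := by
      rcases lt_or_eq_of_le heE.1.1 with h | h
      · exact h
      · exfalso
        have h2 : fa e < 0 := heE.2
        rw [← h, hfa0] at h2
        exact lt_irrefl 0 h2
    exact absurd heE.2 (not_lt.mpr (hpos_near e ⟨he0, heδ⟩).le)
  have hTpos : 0 < T := lt_of_lt_of_le hδ0 hTδ
  -- fa ≥ 0 on [0, T)
  have hnonneg_lt : ∀ s, 0 ≤ s → s < T → 0 ≤ fa s := by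
    intro s hs0 hsT
    by_contra hneg
    push_neg at hneg
    have hsE : s ∈ E := ⟨⟨hs0, le_trans hsT.le (hTmemIcc t₁ ⟨⟨ht₁0, le_rfl⟩, ht₁⟩)⟩, hneg⟩
    exact absurd (hTmemIcc s hsE) (not_le.mpr hsT)
  have hnonneg : ∀ s ∈ Set.Icc (0:ℝ) T, 0 ≤ fa s := by
    intro s hs
    rcases lt_or_eq_of_le hs.2 with h | h
    · exact hnonneg_lt s hs.1 h
    · have hTlim : 0 ≤ fa T := by
        have htd : Filter.Tendsto fa (nhdsWithin T (Set.Iio T)) (nhds (fa T)) :=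
          (hf1.continuous.tendsto T).mono_left nhdsWithin_le_nhds
        refine ge_of_tendsto htd ?_
        filter_upwards [Ioo_mem_nhdsLT_of_mem (Set.mem_Ioc.mpr ⟨hTpos, le_rfl⟩)] with x hx
        exact hnonneg_lt x hx.1.le hx.2
      rw [h]; exact hTlim
  -- deriv fa monotone on [0,T]
  have hmono : MonotoneOn (deriv fa) (Set.Icc 0 T) := by
    apply monotoneOn_of_deriv_nonneg (convex_Icc 0 T) (hf2.continuous.continuousOn)
      (hf2.differentiableOn)
    intro x hx
    rw [interior_Icc] at hx
    rw [hode x hx.1.le]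
    exact mul_nonneg (sq_nonneg _) (hnonneg x ⟨hx.1.le, hx.2.le⟩)
  have hd1 : ∀ s ∈ Set.Icc (0:ℝ) T, 1 ≤ deriv fa s := by
    intro s hs
    have := hmono (Set.left_mem_Icc.mpr hT0) hs hs.1
    rwa [hfa1] at this
  -- fa - id monotone on [0,T]
  have hmono2 : MonotoneOn (fun x => fa x - x) (Set.Icc 0 T) := by
    apply monotoneOn_of_hasDerivWithinAt_nonneg (f' := fun x => deriv fa x - 1) (convex_Icc 0 T)
      ((hf1.continuous.sub continuous_id).continuousOn)
    · intro x hx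
      exact (((hf1 x).hasDerivAt.sub (hasDerivAt_id x))).hasDerivWithinAt
    · intro x hx
      rw [interior_Icc] at hx
      have := hd1 x ⟨hx.1.le, hx.2.le⟩
      linarith
  have := hmono2 (Set.left_mem_Icc.mpr hT0) (Set.right_mem_Icc.mpr hT0) hT0
  simp only [hfa0] at this
  linarith



lemma choi_aux_basic (a fa : ℝ → ℝ)
    (hfa : ContDiff ℝ (⊤ : ℕ∞) fa) (hfa0 : fa 0 = 0) (hfa1 : deriv fa 0 = 1)
    (hode : ∀ t ≥ (0:ℝ), deriv (deriv fa) t = (a t) ^ 2 * fa t) :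
    (∀ t ≥ (0:ℝ), t ≤ fa t) ∧ (∀ t ≥ (0:ℝ), fa t ≤ t * deriv fa t) := by
  have hf1 : Differentiable ℝ fa := hfa.differentiable (by simp)
  have hfa' : ContDiff ℝ ((⊤:ℕ∞):WithTop ℕ∞) fa := hfa.of_le (mod_cast le_top)
  have hf2 : Differentiable ℝ (deriv fa) :=
    (contDiff_infty_iff_deriv.mp hfa').2.differentiable (by simp)
  have hpos := choi_aux_pos a fa hfa hfa0 hfa1 hode
  have hdd : ∀ t ≥ (0:ℝ), 0 ≤ deriv (deriv fa) t := by
    intro t ht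
    rw [hode t ht]
    exact mul_nonneg (sq_nonneg _) (hpos t ht)
  have hmono : MonotoneOn (deriv fa) (Set.Ici 0) := by
    apply monotoneOn_of_deriv_nonneg (convex_Ici 0) (hf2.continuous.continuousOn)
      (hf2.differentiableOn)
    intro x hx
    rw [interior_Ici] at hx
    exact hdd x (le_of_lt hx)
  have hd1 : ∀ t ≥ (0:ℝ), 1 ≤ deriv fa t := by
    intro t ht
    have := hmono (Set.self_mem_Ici) ht ht
    rwa [hfa1] at this
  constructor
  · intro t ht
    have hmono2 : MonotoneOn (fun x => fa x - x) (Set.Ici 0) := by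
      apply monotoneOn_of_hasDerivWithinAt_nonneg (f' := fun x => deriv fa x - 1) (convex_Ici 0)
        ((hf1.continuous.sub continuous_id).continuousOn)
      · intro x _
        exact ((hf1 x).hasDerivAt.sub (hasDerivAt_id x)).hasDerivWithinAt
      · intro x hx
        rw [interior_Ici] at hx
        have := hd1 x hx.le
        linarith
    have := hmono2 Set.self_mem_Ici ht ht
    simp only [hfa0] at this
    linarith
  · intro t ht
    have hmono3 : MonotoneOn (fun x => x * deriv fa x - fa x) (Set.Ici 0) := by
      apply monotoneOn_of_hasDerivWithinAt_nonneg
        (f' := fun x => x * deriv (deriv fa) x) (convex_Ici 0)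
        (((continuous_id.mul hf2.continuous).sub hf1.continuous).continuousOn)
      · intro x _
        have h1 : HasDerivAt (fun s => s * deriv fa s)
            (1 * deriv fa x + x * deriv (deriv fa) x) x :=
          (hasDerivAt_id x).mul (hf2 x).hasDerivAt
        have h2 := h1.sub (hf1 x).hasDerivAt
        have : 1 * deriv fa x + x * deriv (deriv fa) x - deriv fa x
            = x * deriv (deriv fa) x := by ring
        rw [this] at h2
        exact h2.hasDerivWithinAt
      · intro x hx
        rw [interior_Ici] at hx
        exact mul_nonneg hx.le (hdd x hx.le)
    have := hmono3 Set.self_mem_Ici ht ht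
    simp only [hfa0, zero_mul, sub_zero] at this
    linarith


lemma choi_logpow_deriv (p : ℝ) {t : ℝ} (ht : 1 < t) :
    HasDerivAt (fun s => Real.log s ^ p) (p * Real.log t ^ (p - 1) / t) t := by
  have hlt : (0:ℝ) < Real.log t := Real.log_pos ht
  have h1 : HasDerivAt Real.log t⁻¹ t := Real.hasDerivAt_log (by linarith)
  have h2 : HasDerivAt (fun x : ℝ => x ^ p) (p * Real.log t ^ (p - 1)) (Real.log t) :=
    Real.hasDerivAt_rpow_const (Or.inl (ne_of_gt hlt))
  have := h2.comp t h1
  simpa [div_eq_mul_inv, Function.comp_def] using this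

lemma choi_g_deriv (p : ℝ) {t : ℝ} (ht : 1 < t) :
    HasDerivAt (fun s => s * Real.log s ^ p)
      (Real.log t ^ p + p * Real.log t ^ (p - 1)) t := by
  have ht0 : (0:ℝ) < t := by linarith
  have h := (hasDerivAt_id t).mul (choi_logpow_deriv p ht)
  have he : 1 * Real.log t ^ p + id t * (p * Real.log t ^ (p - 1) / t)
      = Real.log t ^ p + p * Real.log t ^ (p - 1) := by
    simp only [id]
    field_simp
  rw [he] at h
  exact h

lemma choi_g_deriv2 (p : ℝ) {t : ℝ} (ht : 1 < t) :
    HasDerivAt (fun s => Real.log s ^ p + p * Real.log s ^ (p - 1))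
      ((p * Real.log t ^ (p - 1) + p * (p - 1) * Real.log t ^ (p - 2)) / t) t := by
  have h1 := choi_logpow_deriv p ht
  have h2 := (choi_logpow_deriv (p - 1) ht).const_mul p
  have h := h1.add h2
  have he : p * Real.log t ^ (p - 1) / t + p * ((p-1) * Real.log t ^ (p - 1 - 1) / t)
      = (p * Real.log t ^ (p - 1) + p * (p - 1) * Real.log t ^ (p - 2)) / t := by
    rw [show p - 1 - 1 = p - 2 by ring]
    field_simp
  rwa [he] at h

set_option maxHeartbeats 2000000 in
/-- Choi's Jacobi field estimate: if `a(t)² ≥ (1+ε)/(t² log t)` for `t ≥ R₀`, then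
for any `0 < ε₁ < ε` there is `R₁ ≥ R₀` with `f_a(t) ≥ t (log t)^{1+ε₁}` and
`f_a'(t)/f_a(t) ≥ 1/t + (1+ε₁)/(t log t)` for `t ≥ R₁`. -/
theorem choi_jacobi_estimate
    (a fa : ℝ → ℝ) (ε R₀ : ℝ) (hε : 0 < ε) (hR₀ : 1 < R₀)
    (ha : Continuous a) (ha0 : ∀ t ≥ (0:ℝ), 0 ≤ a t)
    (hlow : ∀ t ≥ R₀, (1 + ε) / (t ^ 2 * Real.log t) ≤ (a t) ^ 2)
    (hfa : ContDiff ℝ (⊤ : ℕ∞) fa) (hfa0 : fa 0 = 0) (hfa1 : deriv fa 0 = 1)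
    (hode : ∀ t ≥ (0:ℝ), deriv (deriv fa) t = (a t) ^ 2 * fa t) :
    ∀ ε₁, 0 < ε₁ → ε₁ < ε → ∃ R₁ ≥ R₀, ∀ t ≥ R₁,
      t * (Real.log t) ^ (1 + ε₁) ≤ fa t ∧
      1 / t + (1 + ε₁) / (t * Real.log t) ≤ deriv fa t / fa t := by
  have hf1 : Differentiable ℝ fa := hfa.differentiable (by simp)
  have hfa' : ContDiff ℝ ((⊤:ℕ∞):WithTop ℕ∞) fa := hfa.of_le (mod_cast le_top)
  have hf2 : Differentiable ℝ (deriv fa) :=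
    (contDiff_infty_iff_deriv.mp hfa').2.differentiable (by simp)
  obtain ⟨hbase, hWid⟩ := choi_aux_basic a fa hfa hfa0 hfa1 hode
  intro ε₁ hε₁ hε₁ε
  set ε₂ : ℝ := (ε₁ + ε)/2 with hε₂def
  set p : ℝ := 1 + ε₂ with hpdef
  set c : ℝ := (ε - ε₂)/2 with hcdef
  set d : ℝ := ε₂ - ε₁ with hddef
  have hε₂pos : 0 < ε₂ := by positivity
  have hε₂lt : ε₂ < ε := by rw [hε₂def]; linarith
  have hε₁₂ : ε₁ < ε₂ := by rw [hε₂def]; linarith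
  have hp1 : 1 < p := by rw [hpdef]; linarith
  have hcpos : 0 < c := by rw [hcdef]; linarith
  have hdpos : 0 < d := by rw [hddef]; linarith
  set K : ℝ := max 1 (2*p^2/(ε - ε₂)) with hKdef
  set R₂ : ℝ := max R₀ (Real.exp K) with hR₂def
  have hR₂R₀ : R₀ ≤ R₂ := le_max_left _ _
  have hK1 : 1 ≤ K := le_max_left _ _
  have hR₂1 : 1 < R₂ := lt_of_lt_of_le (by
      calc (1:ℝ) < Real.exp 1 := by
            have := Real.add_one_lt_exp (by norm_num : (1:ℝ) ≠ 0); linarith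
        _ ≤ Real.exp K := Real.exp_le_exp.mpr hK1) (le_max_right _ _)
  have hlogR₂ : K ≤ Real.log R₂ := by
    calc K = Real.log (Real.exp K) := (Real.log_exp K).symm
      _ ≤ Real.log R₂ := Real.log_le_log (Real.exp_pos K) (le_max_right _ _)
  -- pointwise facts for t ≥ R₂
  have hfacts : ∀ t : ℝ, R₂ ≤ t → 1 < t ∧ K ≤ Real.log t ∧ 0 < Real.log t ∧ 0 < fa t ∧
      fa t ≤ t * deriv fa t ∧ (1 + ε) * fa t ≤ deriv (deriv fa) t * (t^2 * Real.log t) := by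
    intro t ht
    have ht1 : 1 < t := lt_of_lt_of_le hR₂1 ht
    have ht0 : (0:ℝ) < t := by linarith
    have hL : K ≤ Real.log t := le_trans hlogR₂ (Real.log_le_log (by linarith) ht)
    have hL0 : 0 < Real.log t := Real.log_pos ht1
    have hfpos : 0 < fa t := lt_of_lt_of_le ht0 (hbase t ht0.le)
    have hR0t : R₀ ≤ t := le_trans hR₂R₀ ht
    have hlow' := hlow t hR0t
    have hode' := hode t ht0.le
    have hlast : (1 + ε) * fa t ≤ deriv (deriv fa) t * (t^2 * Real.log t) := by
      rw [hode']
      have h1 : (1 + ε) / (t ^ 2 * Real.log t) * fa t ≤ a t ^ 2 * fa t :=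
        mul_le_mul_of_nonneg_right hlow' hfpos.le
      have h2 : (1 + ε) / (t ^ 2 * Real.log t) * fa t * (t^2 * Real.log t)
          = (1 + ε) * fa t := by
        field_simp
      calc (1 + ε) * fa t = (1 + ε) / (t ^ 2 * Real.log t) * fa t * (t^2 * Real.log t) := h2.symm
        _ ≤ a t ^ 2 * fa t * (t^2 * Real.log t) := by
            apply mul_le_mul_of_nonneg_right h1; positivity
    exact ⟨ht1, hL, hL0, hfpos, hWid t ht0.le, hlast⟩
  set W : ℝ → ℝ := fun t => deriv fa t * (t * Real.log t ^ p)
      - fa t * (Real.log t ^ p + p * Real.log t ^ (p-1)) with hWdef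
  have hWd : ∀ t : ℝ, 1 < t → HasDerivAt W
      (deriv (deriv fa) t * (t * Real.log t ^ p)
        - fa t * ((p * Real.log t ^ (p-1) + p*(p-1)*Real.log t ^ (p-2))/t)) t := by
    intro t ht
    have h1 := ((hf2 t).hasDerivAt.mul (choi_g_deriv p ht))
    have h2 := ((hf1 t).hasDerivAt.mul (choi_g_deriv2 p ht))
    have h := h1.sub h2
    refine h.congr_deriv ?_
    ring
  have hWd_nonneg : ∀ t : ℝ, R₂ ≤ t →
      0 ≤ deriv (deriv fa) t * (t * Real.log t ^ p)
        - fa t * ((p * Real.log t ^ (p-1) + p*(p-1)*Real.log t ^ (p-2))/t) := by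
    intro t ht
    obtain ⟨ht1, hL, hL0, hfpos, hfx, hlast⟩ := hfacts t ht
    have ht0 : (0:ℝ) < t := by linarith
    have hLp : Real.log t ^ p = Real.log t ^ (p-1) * Real.log t := by
      have h := Real.rpow_add_one (ne_of_gt hL0) (p-1)
      rw [show p - 1 + 1 = p from by ring] at h
      exact h
    have hLp1 : Real.log t ^ (p-1) = Real.log t ^ (p-2) * Real.log t := by
      have h := Real.rpow_add_one (ne_of_gt hL0) (p-2)
      rw [show p - 2 + 1 = p - 1 from by ring] at h
      exact h
    have hLp2pos : 0 < Real.log t ^ (p-2) := Real.rpow_pos_of_pos hL0 _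
    have hLp1pos : 0 < Real.log t ^ (p-1) := Real.rpow_pos_of_pos hL0 _
    have hstep : p * Real.log t ^ (p-1) + p*(p-1)*Real.log t ^ (p-2)
        ≤ (1+ε) * Real.log t ^ (p-1) := by
      have h2p : 2*p^2/(ε-ε₂) ≤ Real.log t := le_trans (le_max_right _ _) hL
      rw [div_le_iff₀ (by linarith : (0:ℝ) < ε - ε₂)] at h2p
      have hq : p*(p-1) ≤ (ε - ε₂) * Real.log t := by nlinarith
      rw [hLp1]
      have hre : (1+ε) * (Real.log t ^ (p-2) * Real.log t)
          - (p * (Real.log t ^ (p-2) * Real.log t) + p*(p-1)*Real.log t ^ (p-2))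
          = Real.log t ^ (p-2) * ((ε - ε₂) * Real.log t - p*(p-1)) := by
        rw [hpdef]; ring
      have hnn : 0 ≤ Real.log t ^ (p-2) * ((ε - ε₂) * Real.log t - p*(p-1)) :=
        mul_nonneg hLp2pos.le (by linarith)
      linarith [hre, hnn]
    rw [sub_nonneg, ← mul_div_assoc, div_le_iff₀ ht0]
    calc fa t * (p * Real.log t ^ (p-1) + p*(p-1)*Real.log t ^ (p-2))
        ≤ fa t * ((1+ε) * Real.log t ^ (p-1)) :=
          mul_le_mul_of_nonneg_left hstep hfpos.le
      _ = (1+ε) * fa t * Real.log t ^ (p-1) := by ring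
      _ ≤ deriv (deriv fa) t * (t^2 * Real.log t) * Real.log t ^ (p-1) :=
          mul_le_mul_of_nonneg_right hlast hLp1pos.le
      _ = deriv (deriv fa) t * (t * Real.log t ^ p) * t := by rw [hLp]; ring
  have hWmono : MonotoneOn W (Set.Ici R₂) := by
    apply monotoneOn_of_hasDerivWithinAt_nonneg
      (f' := fun t => deriv (deriv fa) t * (t * Real.log t ^ p)
        - fa t * ((p * Real.log t ^ (p-1) + p*(p-1)*Real.log t ^ (p-2))/t))
      (convex_Ici R₂)
    · intro t ht
      exact ((hWd t (lt_of_lt_of_le hR₂1 ht)).continuousAt).continuousWithinAt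
    · intro t ht
      rw [interior_Ici] at ht
      exact ((hWd t (lt_of_lt_of_le hR₂1 (le_of_lt ht)))).hasDerivWithinAt
    · intro t ht
      rw [interior_Ici] at ht
      exact hWd_nonneg t (le_of_lt ht)
  have ht₀ : ∃ t₀ ≥ R₂, 0 ≤ W t₀ := by
    by_contra hcon
    push_neg at hcon
    have hub : ∀ t, R₂ ≤ t → t * deriv fa t * Real.log t ≤ fa t * (Real.log t + p) := by
      intro t ht
      obtain ⟨ht1, hL, hL0, hfpos, hfx, hlast⟩ := hfacts t ht
      have hW : W t < 0 := hcon t ht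
      simp only [hWdef] at hW
      have hLp : Real.log t ^ p = Real.log t ^ (p-1) * Real.log t := by
        have h := Real.rpow_add_one (ne_of_gt hL0) (p-1)
        rw [show p - 1 + 1 = p from by ring] at h
        exact h
      have hLp1pos : 0 < Real.log t ^ (p-1) := Real.rpow_pos_of_pos hL0 _
      have h2 : deriv fa t * (t * (Real.log t ^ (p-1) * Real.log t))
          ≤ fa t * (Real.log t ^ (p-1) * Real.log t + p * Real.log t ^ (p-1)) := by
        rw [← hLp]; linarith
      have h3 : Real.log t ^ (p-1) * (t * deriv fa t * Real.log t)
          ≤ Real.log t ^ (p-1) * (fa t * (Real.log t + p)) := by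
        calc Real.log t ^ (p-1) * (t * deriv fa t * Real.log t)
            = deriv fa t * (t * (Real.log t ^ (p-1) * Real.log t)) := by ring
          _ ≤ fa t * (Real.log t ^ (p-1) * Real.log t + p * Real.log t ^ (p-1)) := h2
          _ = Real.log t ^ (p-1) * (fa t * (Real.log t + p)) := by ring
      exact le_of_mul_le_mul_left h3 hLp1pos
    set ψ : ℝ → ℝ := fun t => Real.log t * (t * deriv fa t / fa t - 1) with hψdef
    have hψd : ∀ t, R₂ ≤ t → HasDerivAt ψ
        ((t * deriv fa t / fa t - 1) * t⁻¹ + Real.log t *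
          (((deriv fa t + t * deriv (deriv fa) t) * fa t - t * deriv fa t * deriv fa t)
            / fa t ^ 2)) t := by
      intro t ht
      obtain ⟨ht1, hL, hL0, hfpos, hfx, hlast⟩ := hfacts t ht
      have ht0 : (0:ℝ) < t := by linarith
      have hN : HasDerivAt (fun s => s * deriv fa s)
          (deriv fa t + t * deriv (deriv fa) t) t := by
        have h := (hasDerivAt_id t).mul (hf2 t).hasDerivAt
        refine h.congr_deriv ?_
        simp
      have hQ : HasDerivAt (fun s => s * deriv fa s / fa s)
          (((deriv fa t + t * deriv (deriv fa) t) * fa t - t * deriv fa t * deriv fa t)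
            / fa t ^ 2) t := hN.div (hf1 t).hasDerivAt (ne_of_gt hfpos)
      have hlog : HasDerivAt Real.log t⁻¹ t := Real.hasDerivAt_log (ne_of_gt ht0)
      have h := hlog.mul (hQ.sub_const 1)
      refine h.congr_deriv ?_
      ring
    have hψd_ge : ∀ t, R₂ ≤ t → c / t ≤
        (t * deriv fa t / fa t - 1) * t⁻¹ + Real.log t *
          (((deriv fa t + t * deriv (deriv fa) t) * fa t - t * deriv fa t * deriv fa t)
            / fa t ^ 2) := by
      intro t ht
      obtain ⟨ht1, hL, hL0, hfpos, hfx, hlast⟩ := hfacts t ht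
      have ht0 : (0:ℝ) < t := by linarith
      set F := fa t
      set x := deriv fa t
      set A := deriv (deriv fa) t
      set L := Real.log t
      have h2 := hub t ht
      have hx0 : 0 < x := by nlinarith
      have hrw : (t * x / F - 1) * t⁻¹ + L * (((x + t * A) * F - t * x * x) / F ^ 2)
          = ((t * x - F) * F + t * L * ((x + t * A) * F - t * x ^ 2)) / (t * F ^ 2) := by
        field_simp
      rw [hrw, div_le_div_iff₀ ht0 (by positivity)]
      have q1 : t^2 * L * x^2 ≤ t * x * (F * (L + p)) := by
        have h := mul_le_mul_of_nonneg_left h2 (mul_nonneg ht0.le hx0.le)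
        calc t^2 * L * x^2 = t * x * (t * x * L) := by ring
          _ ≤ t * x * (F * (L + p)) := h
      have q2 : (1 + ε) * F * F ≤ A * (t^2 * L) * F := by
        have h := mul_le_mul_of_nonneg_right hlast hfpos.le
        calc (1 + ε) * F * F = (1 + ε) * F * F := rfl
          _ ≤ A * (t^2 * L) * F := h
      have hp' : p * (t * x * F) = t * x * F + ε₂ * (t * x * F) := by rw [hpdef]; ring
      have lin1 : ε * F^2 - ε₂ * (t * x * F)
          ≤ (t * x - F) * F + t * L * ((x + t * A) * F - t * x ^ 2) := by
        nlinarith [q1, q2, hp']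
      have lin1L : (ε * F^2 - ε₂ * (t * x * F)) * L
          ≤ ((t * x - F) * F + t * L * ((x + t * A) * F - t * x ^ 2)) * L :=
        mul_le_mul_of_nonneg_right lin1 hL0.le
      have q3 : ε₂ * (t * x * L) * F ≤ ε₂ * (F * (L + p)) * F :=
        mul_le_mul_of_nonneg_right (mul_le_mul_of_nonneg_left h2 hε₂pos.le) hfpos.le
      have q5 : ε₂ * p * F^2 ≤ p * p * F^2 :=
        mul_le_mul_of_nonneg_right
          (mul_le_mul_of_nonneg_right (show ε₂ ≤ p by rw [hpdef]; linarith)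
            (by linarith : (0:ℝ) ≤ p)) (sq_nonneg F)
      have q4 : 2 * p^2 ≤ (ε - ε₂) * L := by
        have h2p : 2*p^2/(ε-ε₂) ≤ L := le_trans (le_max_right _ _) hL
        rw [div_le_iff₀ (by linarith : (0:ℝ) < ε - ε₂)] at h2p
        linarith
      have q6 : 2 * (p * p * F^2) ≤ (ε - ε₂) * L * F^2 := by
        have h := mul_le_mul_of_nonneg_right q4 (sq_nonneg F)
        nlinarith [h]
      have hcid : 2 * (c * F^2 * L) = ε * (F^2 * L) - ε₂ * (F^2 * L) := by
        rw [hcdef]; ring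
      have hkey : c * F^2 * L
          ≤ ((t * x - F) * F + t * L * ((x + t * A) * F - t * x ^ 2)) * L := by
        linarith [lin1L, q3, q5, q6, hcid]
      have hkey2 : c * F^2 ≤ (t * x - F) * F + t * L * ((x + t * A) * F - t * x ^ 2) :=
        le_of_mul_le_mul_right (by linarith [hkey]) hL0
      have := mul_le_mul_of_nonneg_right hkey2 ht0.le
      linarith [this]
    set χ : ℝ → ℝ := fun t => ψ t - c * Real.log t with hχdef
    have hχmono : MonotoneOn χ (Set.Ici R₂) := by
      apply monotoneOn_of_hasDerivWithinAt_nonneg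
        (f' := fun t => ((t * deriv fa t / fa t - 1) * t⁻¹ + Real.log t *
          (((deriv fa t + t * deriv (deriv fa) t) * fa t - t * deriv fa t * deriv fa t)
            / fa t ^ 2)) - c * t⁻¹)
        (convex_Ici R₂)
      · intro t ht
        have ht0 : (0:ℝ) < t := by linarith [lt_of_lt_of_le hR₂1 ht]
        exact (((hψd t ht).sub ((Real.hasDerivAt_log (ne_of_gt ht0)).const_mul c)).continuousAt).continuousWithinAt
      · intro t ht
        rw [interior_Ici] at ht
        have ht0 : (0:ℝ) < t := by linarith [lt_of_lt_of_le hR₂1 ht.le]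
        exact ((hψd t ht.le).sub ((Real.hasDerivAt_log (ne_of_gt ht0)).const_mul c)).hasDerivWithinAt
      · intro t ht
        rw [interior_Ici] at ht
        have ht0 : (0:ℝ) < t := by linarith [lt_of_lt_of_le hR₂1 ht.le]
        have := hψd_ge t ht.le
        rw [div_eq_mul_inv] at this
        linarith
    set T := R₂ * Real.exp ((p+1)/c) with hTdef
    have hR₂0 : (0:ℝ) < R₂ := by linarith
    have hTR₂ : R₂ ≤ T := le_mul_of_one_le_right hR₂0.le (Real.one_le_exp (by positivity))
    have hlogT : Real.log T = Real.log R₂ + (p+1)/c := by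
      rw [hTdef, Real.log_mul (ne_of_gt hR₂0) (Real.exp_ne_zero _), Real.log_exp]
    have hχle : χ R₂ ≤ χ T := hχmono Set.self_mem_Ici hTR₂ hTR₂
    have hψ0 : 0 ≤ ψ R₂ := by
      obtain ⟨ht1, hL, hL0, hfpos, hfx, hlast⟩ := hfacts R₂ le_rfl
      have h1 : (1:ℝ) ≤ R₂ * deriv fa R₂ / fa R₂ := (one_le_div hfpos).mpr hfx
      simp only [hψdef]
      have := sub_nonneg.mpr h1
      positivity
    have hψT : ψ T ≤ p := by
      obtain ⟨ht1, hL, hL0, hfpos, hfx, hlast⟩ := hfacts T hTR₂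
      have h2 := hub T hTR₂
      simp only [hψdef]
      rw [mul_sub, mul_one, sub_le_iff_le_add, ← mul_div_assoc, div_le_iff₀ hfpos]
      calc Real.log T * (T * deriv fa T) = T * deriv fa T * Real.log T := by ring
        _ ≤ fa T * (Real.log T + p) := h2
        _ = (p + Real.log T) * fa T := by ring
    have hcancel : c * ((p+1)/c) = p + 1 := by field_simp
    simp only [hχdef] at hχle
    rw [hlogT] at hχle
    nlinarith [hχle, hψ0, hψT, hcancel]
  obtain ⟨t₀, ht₀R₂, hWt₀⟩ := ht₀
  have hWnn : ∀ t, t₀ ≤ t → 0 ≤ W t := fun t h =>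
    le_trans hWt₀ (hWmono ht₀R₂ (le_trans ht₀R₂ h) h)
  -- lower bound on the logarithmic derivative, for t ≥ t₀
  have hlow2 : ∀ t, t₀ ≤ t → fa t * (Real.log t + p) ≤ t * deriv fa t * Real.log t := by
    intro t h
    have ht : R₂ ≤ t := le_trans ht₀R₂ h
    obtain ⟨ht1, hL, hL0, hfpos, hfx, hlast⟩ := hfacts t ht
    have hW : 0 ≤ W t := hWnn t h
    simp only [hWdef] at hW
    have hLp : Real.log t ^ p = Real.log t ^ (p-1) * Real.log t := by
      have h' := Real.rpow_add_one (ne_of_gt hL0) (p-1)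
      rw [show p - 1 + 1 = p from by ring] at h'
      exact h'
    have hLp1pos : 0 < Real.log t ^ (p-1) := Real.rpow_pos_of_pos hL0 _
    have h2 : fa t * (Real.log t ^ (p-1) * Real.log t + p * Real.log t ^ (p-1))
        ≤ deriv fa t * (t * (Real.log t ^ (p-1) * Real.log t)) := by
      rw [← hLp]; linarith
    have h3 : Real.log t ^ (p-1) * (fa t * (Real.log t + p))
        ≤ Real.log t ^ (p-1) * (t * deriv fa t * Real.log t) := by
      calc Real.log t ^ (p-1) * (fa t * (Real.log t + p))
          = fa t * (Real.log t ^ (p-1) * Real.log t + p * Real.log t ^ (p-1)) := by ring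
        _ ≤ deriv fa t * (t * (Real.log t ^ (p-1) * Real.log t)) := h2
        _ = Real.log t ^ (p-1) * (t * deriv fa t * Real.log t) := by ring
    exact le_of_mul_le_mul_left h3 hLp1pos
  have hconc2 : ∀ t, t₀ ≤ t →
      1 / t + (1 + ε₁) / (t * Real.log t) ≤ deriv fa t / fa t := by
    intro t h
    have ht : R₂ ≤ t := le_trans ht₀R₂ h
    obtain ⟨ht1, hL, hL0, hfpos, hfx, hlast⟩ := hfacts t ht
    have ht0 : (0:ℝ) < t := by linarith
    have htL : 0 < t * Real.log t := by positivity
    have e1 : 1 / t + (1 + ε₁) / (t * Real.log t)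
        = (Real.log t + (1 + ε₁)) / (t * Real.log t) := by
      field_simp
    rw [e1]
    have e2 : (Real.log t + (1 + ε₁)) / (t * Real.log t)
        ≤ (Real.log t + p) / (t * Real.log t) := by
      gcongr
      rw [hpdef]
      linarith
    refine le_trans e2 ?_
    rw [div_le_div_iff₀ htL hfpos]
    have := hlow2 t h
    linarith
  -- monotonicity of fa / g on [t₀, ∞)
  have hgpos : ∀ t : ℝ, 1 < t → 0 < t * Real.log t ^ p := by
    intro t ht1
    have hL0 : 0 < Real.log t := Real.log_pos ht1
    have : 0 < Real.log t ^ p := Real.rpow_pos_of_pos hL0 _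
    positivity
  have ht₀1 : 1 < t₀ := lt_of_lt_of_le hR₂1 ht₀R₂
  have hqmono : MonotoneOn (fun t => fa t / (t * Real.log t ^ p)) (Set.Ici t₀) := by
    apply monotoneOn_of_hasDerivWithinAt_nonneg
      (f' := fun t => (deriv fa t * (t * Real.log t ^ p)
        - fa t * (Real.log t ^ p + p * Real.log t ^ (p-1))) / (t * Real.log t ^ p) ^ 2)
      (convex_Ici t₀)
    · intro t ht
      have ht1 : 1 < t := lt_of_lt_of_le ht₀1 ht
      exact (((hf1 t).hasDerivAt.div (choi_g_deriv p ht1)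
        (ne_of_gt (hgpos t ht1))).continuousAt).continuousWithinAt
    · intro t ht
      rw [interior_Ici] at ht
      have ht1 : 1 < t := lt_of_lt_of_le ht₀1 ht.le
      exact ((hf1 t).hasDerivAt.div (choi_g_deriv p ht1)
        (ne_of_gt (hgpos t ht1))).hasDerivWithinAt
    · intro t ht
      rw [interior_Ici] at ht
      have ht1 : 1 < t := lt_of_lt_of_le ht₀1 ht.le
      have hW : 0 ≤ W t := hWnn t ht.le
      simp only [hWdef] at hW
      have := sq_nonneg (t * Real.log t ^ p)
      positivity
  -- choose R₁
  obtain ⟨_, _, hL₀0, hF₀pos, _, _⟩ := hfacts t₀ ht₀R₂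
  set C : ℝ := (t₀ * Real.log t₀ ^ p) / fa t₀ with hCdef
  have hCpos : 0 < C := div_pos (hgpos t₀ ht₀1) hF₀pos
  set M : ℝ := max 1 (C ^ (1/d)) with hMdef
  set R₁ : ℝ := max t₀ (Real.exp M) with hR₁def
  have hR₁t₀ : t₀ ≤ R₁ := le_max_left _ _
  refine ⟨R₁, le_trans hR₂R₀ (le_trans ht₀R₂ hR₁t₀), ?_⟩
  intro t htR₁
  have ht₀t : t₀ ≤ t := le_trans hR₁t₀ htR₁
  have htR₂ : R₂ ≤ t := le_trans ht₀R₂ ht₀t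
  obtain ⟨ht1, hLK, hL0, hfpos, hfx, hlast⟩ := hfacts t htR₂
  have ht0 : (0:ℝ) < t := by linarith
  refine ⟨?_, hconc2 t ht₀t⟩
  -- first conclusion
  have hMlog : M ≤ Real.log t := by
    calc M = Real.log (Real.exp M) := (Real.log_exp M).symm
      _ ≤ Real.log t := Real.log_le_log (Real.exp_pos M)
          (le_trans (le_max_right _ _) htR₁)
  have hLd : C ≤ Real.log t ^ d := by
    have h1 : (C ^ (1/d)) ^ d = C := by
      rw [← Real.rpow_mul hCpos.le, one_div, inv_mul_cancel₀ (ne_of_gt hdpos), Real.rpow_one]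
    calc C = (C ^ (1/d)) ^ d := h1.symm
      _ ≤ Real.log t ^ d :=
        Real.rpow_le_rpow (Real.rpow_nonneg hCpos.le _)
          (le_trans (le_max_right 1 _) hMlog) hdpos.le
  have hmono_at := hqmono Set.self_mem_Ici (show t ∈ Set.Ici t₀ from ht₀t) ht₀t
  have hg := hgpos t ht1
  have hg₀ := hgpos t₀ ht₀1
  rw [div_le_div_iff₀ hg₀ hg] at hmono_at
  have h2 : t * Real.log t ^ p ≤ fa t * C := by
    rw [hCdef, ← mul_div_assoc, le_div_iff₀ hF₀pos]
    linarith [hmono_at]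
  have hsplit : Real.log t ^ p = Real.log t ^ (1+ε₁) * Real.log t ^ d := by
    rw [← Real.rpow_add hL0]
    congr 1
    rw [hddef, hpdef, hε₂def]
    ring
  have h3 : t * Real.log t ^ (1+ε₁) * C ≤ t * Real.log t ^ p := by
    rw [hsplit]
    have h4 := mul_le_mul_of_nonneg_left hLd
      (by positivity : (0:ℝ) ≤ t * Real.log t ^ (1+ε₁))
    calc t * Real.log t ^ (1+ε₁) * C = (t * Real.log t ^ (1+ε₁)) * C := by ring
      _ ≤ (t * Real.log t ^ (1+ε₁)) * Real.log t ^ d := h4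
      _ = t * (Real.log t ^ (1+ε₁) * Real.log t ^ d) := by ring
  exact le_of_mul_le_mul_right (le_trans h3 h2) hCpos
end

section
/- Let b : [0,∞) → (0,∞) be decreasing with b(t) ≥ (log t)^ε̃ / t for all t ≥ T₁ (where ε̃ > 0, T₁ > 1) and suppose b(t/2) ≤ C₁ b(t) for all t ≥ 0 with some constant C₁ ≥ 1. Then for every k > 0 there exists a constant c > 1 such that: whenever x, y ≥ 0 satisfy b(y)·|x − y| ≤ k, one has (1/c) b(x) ≤ b(y) ≤ c · b(x). -/
open Real Set Filter

/-!
Since `t * b t ≥ (log t) ^ ε̃ → ∞`, there is `T` beyond which `k / b y ≤ y / 2`; for such `y`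
the condition `b y * |x - y| ≤ k` puts `x` in `[y / 2, 2 y]`, where the doubling bound
`b (t / 2) ≤ C₁ b t` makes `b x` and `b y` comparable with constant `C₁`. For `y ≤ T` both points
lie in the compact interval `[0, T + k / b T]`, on which the decreasing positive `b` varies by at
most the factor `b 0 / b (T + k / b T)`.
-/

theorem tendsto_mul_atTop_of_log_rpow_div_le {b : ℝ → ℝ} {ε T₁ : ℝ} (hε : 0 < ε)
    (hlow : ∀ t ≥ T₁, log t ^ ε / t ≤ b t) :
    Tendsto (fun t => t * b t) atTop atTop := by
  refine tendsto_atTop_mono' atTop ?_ ((tendsto_rpow_atTop hε).comp tendsto_log_atTop)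
  filter_upwards [eventually_ge_atTop T₁, eventually_gt_atTop 0] with t hT₁ ht
  calc log t ^ ε = t * (log t ^ ε / t) := by field_simp
    _ ≤ t * b t := mul_le_mul_of_nonneg_left (hlow t hT₁) ht.le

section Antitone

variable {b : ℝ → ℝ} (hbdec : AntitoneOn b (Ici 0))
include hbdec

theorem comparable_of_abs_sub_le_half {C x y : ℝ} (hhalf : ∀ t ≥ 0, b (t / 2) ≤ C * b t)
    (hC : 0 ≤ C) (hx : 0 ≤ x) (hxy : |x - y| ≤ y / 2) :
    b x ≤ C * b y ∧ b y ≤ C * b x := by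
  obtain ⟨hlo, hhi⟩ := abs_le.mp hxy
  have hy : 0 ≤ y := by linarith [abs_nonneg (x - y)]
  constructor
  · calc b x ≤ b (y / 2) := hbdec (by simp; positivity) (mem_Ici.mpr hx) (by linarith)
      _ ≤ C * b y := hhalf y hy
  · calc b y = b (2 * y / 2) := by rw [mul_div_cancel_left₀ y two_ne_zero]
      _ ≤ C * b (2 * y) := hhalf (2 * y) (by positivity)
      _ ≤ C * b x :=
        mul_le_mul_of_nonneg_left (hbdec (mem_Ici.mpr hx) (by simp; positivity) (by linarith)) hC

theorem le_div_mul_of_mem_Icc (hbpos : ∀ t ≥ 0, 0 < b t) {M u v : ℝ} (hu : u ∈ Icc 0 M)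
    (hv : v ∈ Icc 0 M) : b u ≤ b 0 / b M * b v := by
  have hM : 0 ≤ M := hu.1.trans hu.2
  calc b u ≤ b 0 := hbdec (mem_Ici.mpr le_rfl) (mem_Ici.mpr hu.1) hu.1
    _ = b 0 / b M * b M := (div_mul_cancel₀ _ (hbpos M hM).ne').symm
    _ ≤ b 0 / b M * b v :=
      mul_le_mul_of_nonneg_left (hbdec (mem_Ici.mpr hv.1) (mem_Ici.mpr hM) hv.2)
        (div_pos (hbpos 0 le_rfl) (hbpos M hM)).le

end Antitone

theorem b_comparable_at_scale_decreasing_general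
    (b : ℝ → ℝ) (εt T₁ C₁ : ℝ)
    (hεt : 0 < εt) (hC₁ : 1 ≤ C₁)
    (hbpos : ∀ t ≥ (0:ℝ), 0 < b t)
    (hbdec : AntitoneOn b (Set.Ici (0:ℝ)))
    (hlow : ∀ t ≥ T₁, (Real.log t) ^ εt / t ≤ b t)
    (hhalf : ∀ t ≥ (0:ℝ), b (t / 2) ≤ C₁ * b t) :
    ∀ k > (0:ℝ), ∃ c > (1:ℝ), ∀ x ≥ (0:ℝ), ∀ y ≥ (0:ℝ),
      b y * |x - y| ≤ k → b x / c ≤ b y ∧ b y ≤ c * b x := by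
  intro k hk
  obtain ⟨T, hT⟩ := eventually_atTop.mp
    (((tendsto_mul_atTop_of_log_rpow_div_le hεt hlow).eventually_ge_atTop (2 * k)).and
      (eventually_ge_atTop 0))
  have hT0 : 0 ≤ T := (hT T le_rfl).2
  set M := T + k / b T
  have hR : 0 < b 0 / b M := div_pos (hbpos 0 le_rfl) (hbpos M (by positivity [hbpos T hT0]))
  refine ⟨C₁ + b 0 / b M, by linarith, fun x hx y hy hxy => ?_⟩
  have hdist : |x - y| ≤ k / b y := by rw [le_div_iff₀ (hbpos y hy), mul_comm]; exact hxy
  suffices b x ≤ (C₁ + b 0 / b M) * b y ∧ b y ≤ (C₁ + b 0 / b M) * b x from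
    ⟨(div_le_iff₀ (by linarith)).mpr (by linarith [this.1]), this.2⟩
  rcases le_total T y with hTy | hyT
  · have hclose : |x - y| ≤ y / 2 := by
      rw [le_div_iff₀ (hbpos y hy)] at hdist; nlinarith [(hT y hTy).1]
    obtain ⟨h₁, h₂⟩ := comparable_of_abs_sub_le_half hbdec hhalf (by linarith) hx hclose
    constructor <;> nlinarith [hbpos x hx, hbpos y hy]
  · have hkb : k / b y ≤ k / b T :=
      div_le_div_of_nonneg_left hk.le (hbpos T hT0) (hbdec (mem_Ici.mpr hy) (mem_Ici.mpr hT0) hyT)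
    have hxM : x ∈ Icc 0 M := ⟨hx, by linarith [(abs_le.mp hdist).2]⟩
    have hyM : y ∈ Icc 0 M := ⟨hy, by linarith [div_pos hk (hbpos T hT0)]⟩
    have h₁ := le_div_mul_of_mem_Icc hbdec hbpos hxM hyM
    have h₂ := le_div_mul_of_mem_Icc hbdec hbpos hyM hxM
    constructor <;> nlinarith [hbpos x hx, hbpos y hy]

/-- One-dimensional Lemma 2.3 (decreasing case): a positive decreasing `b` with
`b(t) ≥ (log t)^ε̃/t` for `t ≥ T₁` and `b(t/2) ≤ C₁ b(t)` is comparable at points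
`x, y` with `b(y)|x−y| ≤ k`. -/
theorem b_comparable_at_scale_decreasing
    (b : ℝ → ℝ) (εt T₁ C₁ : ℝ)
    (hεt : 0 < εt) (hT₁ : 1 < T₁) (hC₁ : 1 ≤ C₁)
    (hbpos : ∀ t ≥ (0:ℝ), 0 < b t)
    (hbdec : AntitoneOn b (Set.Ici (0:ℝ)))
    (hlow : ∀ t ≥ T₁, (Real.log t) ^ εt / t ≤ b t)
    (hhalf : ∀ t ≥ (0:ℝ), b (t / 2) ≤ C₁ * b t) :
    ∀ k > (0:ℝ), ∃ c > (1:ℝ), ∀ x ≥ (0:ℝ), ∀ y ≥ (0:ℝ),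
      b y * |x - y| ≤ k → b x / c ≤ b y ∧ b y ≤ c * b x :=
  b_comparable_at_scale_decreasing_general b εt T₁ C₁ hεt hC₁ hbpos hbdec hlow hhalf
end

section
/- Let b : [0,∞) → (0,∞) be increasing with b(t+1) ≤ C₁ b(t) for all t ≥ 0 (C₁ ≥ 1) and b(t) ≥ (log t)^ε̃/t for t ≥ T₁ > e, ε̃ > 0. Then for every k > 0 there is a constant c > 1 such that whenever x, y ≥ 0 satisfy b(y)|x−y| ≤ k, one has b(x)/c ≤ b(y) ≤ c b(x). -/
/-!
Since `b y ≥ b 0`, the hypothesis `b y * |x - y| ≤ k` forces `|x - y| ≤ n := ⌈k / b 0⌉`; by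
monotonicity and `n` unit shifts, `b` changes by a factor at most `C₁ ^ n` between `x` and `y`,
so `c = C₁ ^ n + 1` works.
-/

open Set

section ShiftBounded

variable {b : ℝ → ℝ} {C : ℝ}

theorem apply_add_nat_le_pow_mul (hC : 0 ≤ C) (hshift : ∀ t ≥ (0:ℝ), b (t + 1) ≤ C * b t)
    {t : ℝ} (ht : 0 ≤ t) (m : ℕ) : b (t + m) ≤ C ^ m * b t := by
  induction m with
  | zero => simp
  | succ m ih =>
    calc b (t + (m + 1 : ℕ)) = b (t + m + 1) := by push_cast; ring_nf
      _ ≤ C * b (t + m) := hshift _ (by positivity)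
      _ ≤ C * (C ^ m * b t) := mul_le_mul_of_nonneg_left ih hC
      _ = C ^ (m + 1) * b t := by ring

theorem MonotoneOn.apply_le_pow_mul_of_abs_sub_le (hb : MonotoneOn b (Ici 0)) (hC : 0 ≤ C)
    (hshift : ∀ t ≥ (0:ℝ), b (t + 1) ≤ C * b t) {x y : ℝ} (hx : 0 ≤ x) (hy : 0 ≤ y) {n : ℕ}
    (hxy : |x - y| ≤ n) : b y ≤ C ^ n * b x := by
  have hyx : y ≤ x + n := by linarith [neg_abs_le (x - y)]
  exact (hb hy (mem_Ici.mpr (by positivity)) hyx).trans (apply_add_nat_le_pow_mul hC hshift hx n)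

theorem MonotoneOn.abs_sub_le_div_of_mul_abs_sub_le (hb : MonotoneOn b (Ici 0)) (hb0 : 0 < b 0)
    {x y k : ℝ} (hy : 0 ≤ y) (h : b y * |x - y| ≤ k) : |x - y| ≤ k / b 0 := by
  rw [le_div_iff₀ hb0, mul_comm]
  exact (mul_le_mul_of_nonneg_right (hb self_mem_Ici hy hy) (abs_nonneg _)).trans h

end ShiftBounded

theorem b_comparable_at_scale_increasing_general
    (b : ℝ → ℝ) (C₁ : ℝ)
    (hC₁ : 1 ≤ C₁)
    (hbpos : ∀ t ≥ (0:ℝ), 0 < b t)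
    (hbinc : MonotoneOn b (Set.Ici (0:ℝ)))
    (hshift : ∀ t ≥ (0:ℝ), b (t + 1) ≤ C₁ * b t) :
    ∀ k > (0:ℝ), ∃ c > (1:ℝ), ∀ x ≥ (0:ℝ), ∀ y ≥ (0:ℝ),
      b y * |x - y| ≤ k → b x / c ≤ b y ∧ b y ≤ c * b x := by
  intro k _
  set n : ℕ := ⌈k / b 0⌉₊
  have hCn : 1 ≤ C₁ ^ n := one_le_pow₀ hC₁
  have hC₀ : 0 ≤ C₁ := zero_le_one.trans hC₁
  refine ⟨C₁ ^ n + 1, by linarith, fun x hx y hy hxy => ?_⟩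
  have hdist : |x - y| ≤ n :=
    (hbinc.abs_sub_le_div_of_mul_abs_sub_le (hbpos 0 le_rfl) hy hxy).trans (Nat.le_ceil _)
  have hyx : b y ≤ C₁ ^ n * b x := hbinc.apply_le_pow_mul_of_abs_sub_le hC₀ hshift hx hy hdist
  have hxy' : b x ≤ C₁ ^ n * b y :=
    hbinc.apply_le_pow_mul_of_abs_sub_le hC₀ hshift hy hx (by rwa [abs_sub_comm])
  have hbx := hbpos x hx
  have hby := hbpos y hy
  constructor
  · rw [div_le_iff₀ (by positivity)]
    nlinarith
  · nlinarith

/-- One-dimensional Lemma 2.3 (increasing case): a positive increasing `b` with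
`b(t+1) ≤ C₁ b(t)` and `b(t) ≥ (log t)^ε̃/t` for `t ≥ T₁ > e` is comparable at points
`x, y` with `b(y)|x−y| ≤ k`. -/
theorem b_comparable_at_scale_increasing
    (b : ℝ → ℝ) (εt T₁ C₁ : ℝ)
    (hεt : 0 < εt) (hT₁ : Real.exp 1 < T₁) (hC₁ : 1 ≤ C₁)
    (hbpos : ∀ t ≥ (0:ℝ), 0 < b t)
    (hbinc : MonotoneOn b (Set.Ici (0:ℝ)))
    (hshift : ∀ t ≥ (0:ℝ), b (t + 1) ≤ C₁ * b t)
    (hlow : ∀ t ≥ T₁, (Real.log t) ^ εt / t ≤ b t) :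
    ∀ k > (0:ℝ), ∃ c > (1:ℝ), ∀ x ≥ (0:ℝ), ∀ y ≥ (0:ℝ),
      b y * |x - y| ≤ k → b x / c ≤ b y ∧ b y ≤ c * b x :=
  b_comparable_at_scale_increasing_general b C₁ hC₁ hbpos hbinc hshift
end
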